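/- arXiv:1101.4442 — 5 statements merged into one kernel-verified Lean document; each statement's English description precedes it below -/
import Mathlib

section
/- There exist infinitely many squarefree integers D > 1 with D ≡ 1 (mod 4) such that the ring of integers O_K of the real quadratic field K = ℚ(√D) contains a nonzero ideal I for which the planar lattice Λ_K(I) is well-rounded. -/
/-!
Let `D = s t` with `0 < s, t`, `t ≤ 3 s`, `s ≤ 3 t`, and `I = (s, (s + √D) / 2)`. On the real
quadratic field `K` the squared length of `x` is `Tr (x²)`, so `(m + n √D) / 2` has squared
length `(m² + D n²) / 2`. Every `x ∈ I` has this shape with `m ≡ n (mod 2)` and `s ∣ m = Tr x`,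
which forces `m² + D n² ≥ s² + D` unless `x = 0`. Equality holds for `(s ± √D) / 2 ∈ I`, and
these two vectors span `K`. Bertrand's postulate supplies infinitely many such `D`: `p q` or
`3 p q` for primes `5 ≤ p < q ≤ 2 p`.
-/

open NumberField

/-- The squared Euclidean norm of the image of `x : K` under the embedding
`σ : K → ℝ^d`, `σ(x) = (σ₁(x),…,σ_{r₁}(x), Re τ₁(x), Im τ₁(x),…)`; it equals
the sum over all infinite places `w` of `K` of `(w x)^2`. -/
noncomputable def sqNorm (K : Type*) [Field K] [NumberField K] (x : K) : ℝ :=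
  ∑ w : InfinitePlace K, (w x) ^ 2

/-- The minimum `|Λ|` of the lattice `σ(S)`: the infimum of the squared Euclidean
norms of images of nonzero elements of `S ⊆ K`. -/
noncomputable def latMin (K : Type*) [Field K] [NumberField K] (S : Set K) : ℝ :=
  sInf {r : ℝ | ∃ x ∈ S, x ≠ 0 ∧ sqNorm K x = r}

/-- The elements of `S ⊆ K` whose images under `σ` are minimal vectors of the
lattice `σ(S)`. -/
def minVecs (K : Type*) [Field K] [NumberField K] (S : Set K) : Set K :=
  {x ∈ S | sqNorm K x = latMin K S}

/-- The lattice `σ(S) ⊆ ℝ^d` is well-rounded: its minimal vectors span `ℝ^d`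
(identified with the mixed space `ℝ^{r₁} × ℂ^{r₂}`). -/
def IsWellRounded (K : Type*) [Field K] [NumberField K] (S : Set K) : Prop :=
  Submodule.span ℝ (mixedEmbedding K '' minVecs K S) = ⊤

open InfinitePlace

section

variable {K : Type*} [Field K] [NumberField K]

theorem sum_norm_embedding_sq (x : K) :
    ∑ φ : K →+* ℂ, ‖φ x‖ ^ 2 = ∑ w : InfinitePlace K, mult w * w x ^ 2 := by
  classical
  rw [← Finset.sum_fiberwise Finset.univ InfinitePlace.mk]
  refine Finset.sum_congr rfl fun w _ ↦ ?_
  have hw : ∀ φ ∈ ({φ | mk φ = w} : Finset (K →+* ℂ)), ‖φ x‖ ^ 2 = w x ^ 2 :=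
    fun φ hφ ↦ by rw [← (Finset.mem_filter.mp hφ).2, apply]
  rw [Finset.sum_congr rfl hw, Finset.sum_const, card_filter_mk_eq, nsmul_eq_mul]

theorem sqNorm_eq_trace_sq [IsTotallyReal K] (x : K) :
    sqNorm K x = Algebra.trace ℚ K (x ^ 2) := by
  have hsq : ∀ φ : K →+* ℂ, ((‖φ x‖ ^ 2 : ℝ) : ℂ) = φ (x ^ 2) := fun φ ↦ by
    have hφ := IsTotallyReal.complexEmbedding_isReal φ
    rw [map_pow, ← hφ.coe_embedding_apply, Complex.norm_real, Real.norm_eq_abs, sq_abs]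
    norm_cast
  have hsum : sqNorm K x = ∑ φ : K →+* ℂ, ‖φ x‖ ^ 2 := by
    simp [sqNorm, sum_norm_embedding_sq]
  apply Complex.ofReal_injective
  rw [hsum, Complex.ofReal_sum, Complex.ofReal_ratCast, ← eq_ratCast (algebraMap ℚ ℂ),
    trace_eq_sum_embeddings ℂ, ← (RingHom.equivRatAlgHom K ℂ).sum_comp]
  exact Finset.sum_congr rfl fun φ _ ↦ hsq φ

theorem exists_intCast_eq_trace {x : K} (hx : IsIntegral ℤ x) :
    ∃ k : ℤ, Algebra.trace ℚ K x = k := by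
  obtain ⟨k, hk⟩ :=
    IsIntegrallyClosed.isIntegral_iff.mp (Algebra.isIntegral_trace (L := ℚ) hx)
  exact ⟨k, by rw [← hk, algebraMap_int_eq, eq_intCast]⟩

theorem latMin_eq_of_forall_le {S : Set K} {x : K} (hxS : x ∈ S) (hx0 : x ≠ 0)
    (hle : ∀ y ∈ S, y ≠ 0 → sqNorm K x ≤ sqNorm K y) : latMin K S = sqNorm K x := by
  have hlow : sqNorm K x ∈ lowerBounds {r : ℝ | ∃ y ∈ S, y ≠ 0 ∧ sqNorm K y = r} := by
    rintro _ ⟨y, hyS, hy0, rfl⟩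
    exact hle y hyS hy0
  exact le_antisymm (csInf_le ⟨_, hlow⟩ ⟨x, hxS, hx0, rfl⟩)
    (le_csInf ⟨_, x, hxS, hx0, rfl⟩ hlow)

theorem span_real_mixedEmbedding_eq_top {s : Set K} (hs : Submodule.span ℚ s = ⊤) :
    Submodule.span ℝ (mixedEmbedding K '' s) = ⊤ := by
  rw [eq_top_iff, ← (mixedEmbedding.latticeBasis K).span_eq, Submodule.span_le]
  rintro _ ⟨i, rfl⟩
  rw [mixedEmbedding.latticeBasis_apply]
  have hi : (integralBasis K i : K) ∈ Submodule.span ℚ s := hs ▸ Submodule.mem_top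
  have := Submodule.apply_mem_span_image_of_mem_span
    (mixedEmbedding K).toRatAlgHom.toLinearMap hi
  exact Submodule.span_le_restrictScalars ℚ ℝ _ this

theorem isWellRounded_of_span_minVecs {S : Set K} (hS : Submodule.span ℚ (minVecs K S) = ⊤) :
    IsWellRounded K S :=
  span_real_mixedEmbedding_eq_top hS

end

theorem Int.not_isSquare_of_squarefree {D : ℤ} (hsf : Squarefree D) (hD : D ≠ 1) :
    ¬IsSquare D := by
  rintro ⟨k, rfl⟩
  rcases Int.isUnit_iff.mp (hsf k dvd_rfl) with rfl | rfl <;> simp at hD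

theorem Int.emod_two_eq_of_even_sq_add_mul_sq {D m n : ℤ} (hD : Odd D)
    (h : Even (m ^ 2 + D * n ^ 2)) : m % 2 = n % 2 := by
  obtain ⟨e, rfl⟩ := hD
  obtain ⟨N, hN⟩ := h
  have heven : Even ((m + n) ^ 2) := ⟨N - e * n ^ 2 + m * n, by linear_combination hN⟩
  obtain ⟨r, hr⟩ := (Int.even_pow.mp heven).1
  omega

theorem Int.sq_add_mul_le_of_dvd {s t m n : ℤ} (hs : 0 < s) (ht : 0 < t) (hts : t ≤ 3 * s)
    (hst : s ≤ 3 * t) (hs2 : s % 2 = 1) (hsm : s ∣ m) (hmn : m % 2 = n % 2)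
    (h0 : m ≠ 0 ∨ n ≠ 0) : s ^ 2 + s * t ≤ m ^ 2 + s * t * n ^ 2 := by
  have one_le_sq (x : ℤ) (hx : x ≠ 0) : 1 ≤ x ^ 2 :=
    (one_le_sq_iff_one_le_abs x).mpr (Int.one_le_abs hx)
  have four_le_sq (x : ℤ) (hx : x ≠ 0) (hx2 : x % 2 = 0) : 4 ≤ x ^ 2 := by
    obtain ⟨y, rfl⟩ : ∃ y, x = 2 * y := ⟨x / 2, by omega⟩
    have := one_le_sq y (by rintro rfl; simp at hx)
    linarith
  have hst0 : 0 < s * t := mul_pos hs ht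
  obtain ⟨w, rfl⟩ := hsm
  rcases eq_or_ne n 0 with rfl | hn
  · have hw : 4 ≤ w ^ 2 := four_le_sq w (by rintro rfl; simp at h0) (by
      rcases Int.emod_two_eq_zero_or_one w with h | h
      · exact h
      · simp [Int.mul_emod, hs2, h] at hmn)
    nlinarith
  · rcases eq_or_ne w 0 with rfl | hw
    · have := four_le_sq n hn (by simpa using hmn.symm)
      nlinarith
    · nlinarith [one_le_sq w hw, one_le_sq n hn]

namespace QuadraticField

open Polynomial

variable {K : Type*} [Field K] [NumberField K] {D : ℤ} {α : K}

theorem isIntegral_half_add_mul (hα : α ^ 2 = D) (hD4 : D % 4 = 1) {m n : ℤ}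
    (hmn : m % 2 = n % 2) : IsIntegral ℤ ((m + n * α) / 2) := by
  obtain ⟨r, hr⟩ : ∃ r, m = n + 2 * r := ⟨(m - n) / 2, by omega⟩
  obtain ⟨q, hq⟩ : ∃ q, D = 4 * q + 1 := ⟨D / 4, by omega⟩
  -- `X² - m X + (m² - D n²) / 4`, with `m = n + 2 r` and `D = 4 q + 1`
  refine ⟨X ^ 2 + (C (-m : ℤ) * X + C (r * n + r ^ 2 - q * n ^ 2 : ℤ)), ?_, ?_⟩
  · exact monic_X_pow_add (degree_linear_le.trans_lt (by norm_num))
  · simp only [eval₂_add, eval₂_mul, eval₂_pow, eval₂_X, eval₂_C]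
    simp only [eq_intCast]
    rw [hr]
    push_cast
    linear_combination (norm := skip) (n ^ 2 / 4 : K) * hα
    rw [hq]; push_cast; ring

theorem half_add_mul_eq (m n : ℤ) :
    ((m : K) + n * α) / 2 = ((m / 2 : ℚ) : K) + ((n / 2 : ℚ) : K) * α := by
  push_cast
  ring

section

variable (hα : α ^ 2 = D) (hD : ¬IsSquare (D : ℚ))
include hα hD

theorem ratCast_ne_sqrt (q : ℚ) : (q : K) ≠ α := by
  intro h
  refine hD ⟨q, ?_⟩
  rw [← sq]
  exact_mod_cast (h ▸ hα : ((q : K)) ^ 2 = D).symm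

theorem linearIndependent_one_sqrt : LinearIndependent ℚ ![1, α] := by
  rw [LinearIndependent.pair_iff]
  intro c d h
  rw [Rat.smul_def, Rat.smul_def, mul_one] at h
  by_cases hd : d = 0
  · subst hd
    simpa using h
  · refine absurd ?_ (ratCast_ne_sqrt hα hD (-c / d))
    have hdK : (d : K) ≠ 0 := by exact_mod_cast hd
    rw [Rat.cast_div, Rat.cast_neg, div_eq_iff hdK]
    linear_combination -h

theorem minpoly_sqrt : minpoly ℚ α = X ^ 2 - C (D : ℚ) := by
  refine (minpoly.eq_of_irreducible_of_monic ?_ ?_ (monic_X_pow_sub_C _ two_ne_zero)).symm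
  · refine X_pow_sub_C_irreducible_of_prime Nat.prime_two fun q hq ↦ hD ⟨q, ?_⟩
    rw [← hq, sq]
  · simp [hα]

theorem trace_sqrt : Algebra.trace ℚ K α = 0 := by
  have hdeg : (X ^ 2 - C (D : ℚ)).natDegree = 2 := natDegree_X_pow_sub_C
  rw [trace_eq_finrank_mul_minpoly_nextCoeff, minpoly_sqrt hα hD,
    nextCoeff_of_natDegree_pos (by rw [hdeg]; norm_num), hdeg, coeff_sub, coeff_X_pow, coeff_C]
  norm_num

variable (hrank : Module.finrank ℚ K = 2)
include hrank

theorem span_one_sqrt_eq_top : Submodule.span ℚ {1, α} = ⊤ := by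
  rw [← Matrix.range_cons_cons_empty]
  exact (linearIndependent_one_sqrt hα hD).span_eq_top_of_card_eq_finrank' (by simp [hrank])

theorem exists_eq_add_mul_sqrt (x : K) : ∃ c d : ℚ, x = c + d * α := by
  have hx : x ∈ Submodule.span ℚ {1, α} :=
    span_one_sqrt_eq_top hα hD hrank ▸ Submodule.mem_top
  obtain ⟨c, d, h⟩ := Submodule.mem_span_pair.mp hx
  exact ⟨c, d, by rw [← h, Rat.smul_def, Rat.smul_def, mul_one]⟩

theorem trace_add_mul_sqrt (c d : ℚ) : Algebra.trace ℚ K (c + d * α) = 2 * c := by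
  rw [map_add, ← eq_ratCast (algebraMap ℚ K), ← eq_ratCast (algebraMap ℚ K),
    ← Algebra.smul_def,     map_smul, Algebra.trace_algebraMap, trace_sqrt hα hD, hrank]
  simp [mul_comm]

theorem trace_mul_add_mul_sqrt (c d c' d' : ℚ) :
    Algebra.trace ℚ K ((c + d * α) * (c' + d' * α)) = 2 * (c * c' + D * d * d') := by
  have h : ((c : K) + d * α) * (c' + d' * α) =
      ((c * c' + D * d * d' : ℚ) : K) + (c * d' + d * c' : ℚ) * α := by
    push_cast
    linear_combination (d * d' : K) * hα
  rw [h, trace_add_mul_sqrt hα hD hrank]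

theorem ringHom_ext_of_apply_sqrt {φ ψ : K →+* ℂ} (h : φ α = ψ α) : φ = ψ := by
  ext x
  obtain ⟨c, d, rfl⟩ := exists_eq_add_mul_sqrt hα hD hrank x
  simp [h]

theorem isTotallyReal (hpos : 0 < D) : IsTotallyReal K where
  isReal w := by
    rw [InfinitePlace.isReal_iff, ComplexEmbedding.isReal_iff]
    refine ringHom_ext_of_apply_sqrt hα hD hrank ?_
    have hsq : (w.embedding α) ^ 2 = ((√(D : ℝ) : ℝ) : ℂ) ^ 2 := by
      rw [← map_pow, hα, map_intCast, ← Complex.ofReal_pow, Real.sq_sqrt (by positivity)]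
      norm_cast
    rw [ComplexEmbedding.conjugate_coe_eq]
    rcases sq_eq_sq_iff_eq_or_eq_neg.mp hsq with h | h <;> rw [h] <;> simp

theorem exists_eq_half_of_isIntegral (hsf : Squarefree D) (hodd : Odd D) {x : K}
    (hx : IsIntegral ℤ x) : ∃ m n : ℤ, x = (m + n * α) / 2 ∧ m % 2 = n % 2 := by
  obtain ⟨c, d, rfl⟩ := exists_eq_add_mul_sqrt hα hD hrank x
  have hαint : IsIntegral ℤ α :=
    ⟨X ^ 2 - C D, monic_X_pow_sub_C _ two_ne_zero, by
      rw [eval₂_sub, eval₂_X_pow, eval₂_C, hα, eq_intCast, sub_self]⟩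
  have hαx : α * (c + d * α) = ((d * D : ℚ) : K) + c * α := by
    push_cast
    linear_combination (d : K) * hα
  obtain ⟨m, hm⟩ := exists_intCast_eq_trace hx
  obtain ⟨k, hk⟩ := exists_intCast_eq_trace (hαint.mul hx)
  obtain ⟨N, hN⟩ := exists_intCast_eq_trace (hx.mul hx)
  rw [trace_add_mul_sqrt hα hD hrank] at hm
  rw [hαx, trace_add_mul_sqrt hα hD hrank] at hk
  rw [trace_mul_add_mul_sqrt hα hD hrank] at hN
  have hk2 : k ^ 2 = D * (2 * N - m ^ 2) := by
    have : ((k ^ 2 : ℤ) : ℚ) = ((D * (2 * N - m ^ 2) : ℤ) : ℚ) := by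
      push_cast
      rw [← hk, ← hm, ← hN]
      ring
    exact_mod_cast this
  obtain ⟨n, rfl⟩ := (hsf.dvd_pow_iff_dvd two_ne_zero).mp ⟨_, hk2⟩
  have hD0 : (D : ℚ) ≠ 0 := by rintro h; exact hD ⟨0, by simp [h]⟩
  have hn : (n : ℚ) = 2 * d := by
    apply mul_left_cancel₀ hD0
    push_cast at hk
    linear_combination -hk
  refine ⟨m, n, ?_, ?_⟩
  · have hmK : (m : K) = 2 * c := by exact_mod_cast congrArg (Rat.cast : ℚ → K) hm.symm
    have hnK : (n : K) = 2 * d := by exact_mod_cast congrArg (Rat.cast : ℚ → K) hn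
    rw [hmK, hnK]
    ring
  · refine Int.emod_two_eq_of_even_sq_add_mul_sq hodd ⟨N, ?_⟩
    have : ((m ^ 2 + D * n ^ 2 : ℤ) : ℚ) = ((N + N : ℤ) : ℚ) := by
      push_cast
      rw [← hm, hn, ← hN]
      ring
    exact_mod_cast this

theorem trace_half_add_mul (m n : ℤ) : Algebra.trace ℚ K ((m + n * α) / 2) = m := by
  rw [half_add_mul_eq, trace_add_mul_sqrt hα hD hrank]
  ring

theorem trace_half_mul_half (a b c d : ℤ) :
    Algebra.trace ℚ K ((a + b * α) / 2 * ((c + d * α) / 2)) = (a * c + D * b * d) / 2 := by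
  rw [half_add_mul_eq, half_add_mul_eq, trace_mul_add_mul_sqrt hα hD hrank]
  ring

theorem sqNorm_half_add_mul (hpos : 0 < D) (m n : ℤ) :
    sqNorm K ((m + n * α) / 2) = ((m ^ 2 + D * n ^ 2) / 2 : ℚ) := by
  have := isTotallyReal hα hD hrank hpos
  rw [sqNorm_eq_trace_sq, sq, trace_half_mul_half hα hD hrank]
  congr 1
  ring

theorem exists_eq_half_of_mem_span_pair {s t : ℤ} (hst : s * t = D) (hsf : Squarefree D)
    (hD4 : D % 4 = 1) {μ y : 𝓞 K} (hμ : (μ : K) = (s + α) / 2)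
    (hy : y ∈ Ideal.span {(s : 𝓞 K), μ}) :
    ∃ m n : ℤ, (y : K) = (m + n * α) / 2 ∧ m % 2 = n % 2 ∧ s ∣ m := by
  have hodd : Odd D := Int.odd_iff.mpr (by omega)
  have ht2 : t % 2 = 1 := Int.odd_iff.mp (Int.odd_mul.mp (hst ▸ hodd)).2
  obtain ⟨m, n, hy', hmn⟩ :=
    exists_eq_half_of_isIntegral hα hD hrank hsf hodd (RingOfIntegers.isIntegral_coe y)
  refine ⟨m, n, hy', hmn, ?_⟩
  obtain ⟨u, v, rfl⟩ := Ideal.mem_span_pair.mp hy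
  obtain ⟨k, hk⟩ := exists_intCast_eq_trace (RingOfIntegers.isIntegral_coe u)
  obtain ⟨a, b, hv, hab⟩ :=
    exists_eq_half_of_isIntegral hα hD hrank hsf hodd (RingOfIntegers.isIntegral_coe v)
  obtain ⟨r, hr⟩ : ∃ r : ℤ, (a + t * b : ℚ) = 2 * r := by
    obtain ⟨t', rfl⟩ : ∃ t', t = 2 * t' + 1 := ⟨t / 2, by omega⟩
    obtain ⟨e, he⟩ : ∃ e : ℤ, (a + b : ℚ) = 2 * e :=
      ⟨(a + b) / 2, by exact_mod_cast (by omega : a + b = 2 * ((a + b) / 2))⟩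
    exact ⟨e + t' * b, by push_cast; linear_combination he⟩
  -- `m = Tr y`, and `Tr (u s + v μ) = s Tr u + s (a + t b) / 2` for `v = (a + b √D) / 2`.
  have hus : Algebra.trace ℚ K (algebraMap (𝓞 K) K u * s) = s * k := by
    have : algebraMap (𝓞 K) K u * s = (s : ℚ) • algebraMap (𝓞 K) K u := by
      rw [Rat.smul_def, mul_comm, Rat.cast_intCast]
    rw [this, map_smul, hk, smul_eq_mul]
  have hvμ : Algebra.trace ℚ K (algebraMap (𝓞 K) K v * μ) = s * r := by
    have := trace_half_mul_half hα hD hrank a b s 1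
    simp only [Int.cast_one, one_mul, mul_one] at this
    rw [← hv, ← hμ] at this
    rw [RingOfIntegers.coe_eq_algebraMap, this, ← hst]
    push_cast
    linear_combination (s / 2 : ℚ) * hr
  have hm : (m : ℚ) = s * (k + r) := by
    rw [← trace_half_add_mul hα hD hrank m n, ← hy', map_add, map_mul, map_mul, map_intCast,
      map_add, hus, ← RingOfIntegers.coe_eq_algebraMap μ, hvμ]
    ring
  exact ⟨k + r, by exact_mod_cast hm⟩

theorem sqNorm_le_of_mem_span_pair (hpos : 0 < D) (hsf : Squarefree D) (hD4 : D % 4 = 1)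
    {s t : ℤ} (hst : s * t = D) (hs : 0 < s) (hts : t ≤ 3 * s) (hs3 : s ≤ 3 * t)
    {μ y : 𝓞 K} (hμ : (μ : K) = (s + α) / 2) (hy : y ∈ Ideal.span {(s : 𝓞 K), μ})
    (hy0 : (y : K) ≠ 0) :
    (((s ^ 2 + D) / 2 : ℚ) : ℝ) ≤ sqNorm K y := by
  have ht : 0 < t := pos_of_mul_pos_right (hst ▸ hpos) hs.le
  have hs2 : s % 2 = 1 :=
    Int.odd_iff.mp (Int.odd_mul.mp (Int.odd_iff.mpr (by omega) : Odd (s * t))).1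
  obtain ⟨m, n, hy', hmn, hsm⟩ :=
    exists_eq_half_of_mem_span_pair hα hD hrank hst hsf hD4 hμ hy
  have h0 : m ≠ 0 ∨ n ≠ 0 := by
    by_contra! h
    simp [hy', h.1, h.2] at hy0
  have key := Int.sq_add_mul_le_of_dvd hs ht hts hs3 hs2 hsm hmn h0
  rw [hy', sqNorm_half_add_mul hα hD hrank hpos, Rat.cast_le, ← hst]
  have : ((s ^ 2 + s * t : ℤ) : ℚ) ≤ ((m ^ 2 + s * t * n ^ 2 : ℤ) : ℚ) := by
    exact_mod_cast key
  push_cast at this ⊢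
  linarith

theorem span_half_add_sub_eq_top {s : ℤ} (hs : s ≠ 0) :
    Submodule.span ℚ {(s + α) / 2, (s - α) / 2} = ⊤ := by
  rw [eq_top_iff, ← span_one_sqrt_eq_top hα hD hrank, Submodule.span_le]
  have hplus : (s + α) / 2 ∈ Submodule.span ℚ {(s + α) / 2, (s - α) / 2} :=
    Submodule.subset_span (by simp)
  have hminus : (s - α) / 2 ∈ Submodule.span ℚ {(s + α) / 2, (s - α) / 2} :=
    Submodule.subset_span (by simp)
  have hs0 : (s : K) ≠ 0 := by exact_mod_cast hs
  rintro x (rfl | hx)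
  · have : (1 : K) = (s : ℚ)⁻¹ • ((s + α) / 2 + (s - α) / 2) := by
      rw [Rat.smul_def]; push_cast; field_simp; ring
    rw [this]
    exact Submodule.smul_mem _ _ (Submodule.add_mem _ hplus hminus)
  · rw [Set.mem_singleton_iff.mp hx]
    have h := Submodule.sub_mem _ hplus hminus
    rwa [show ((s : K) + α) / 2 - (s - α) / 2 = α by ring] at h

end

theorem exists_isWellRounded_ideal (hα : α ^ 2 = D) (hsf : Squarefree D) (hD1 : 1 < D)
    (hD4 : D % 4 = 1) (hrank : Module.finrank ℚ K = 2) {s t : ℤ} (hst : s * t = D) (hs : 0 < s)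
    (hts : t ≤ 3 * s) (hs3 : s ≤ 3 * t) :
    ∃ I : Ideal (𝓞 K), I ≠ ⊥ ∧
      IsWellRounded K (algebraMap (𝓞 K) K '' (I : Set (𝓞 K))) := by
  have hD : ¬IsSquare (D : ℚ) :=
    Rat.isSquare_intCast_iff.not.mpr (Int.not_isSquare_of_squarefree hsf hD1.ne')
  have hs2 : s % 2 = 1 :=
    Int.odd_iff.mp (Int.odd_mul.mp (Int.odd_iff.mpr (by omega) : Odd (s * t))).1
  have hμint : IsIntegral ℤ ((s + α) / 2) := by
    simpa using isIntegral_half_add_mul hα hD4 (m := s) (n := 1) (by omega)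
  obtain ⟨μ, hμ⟩ : ∃ μ : 𝓞 K, (μ : K) = (s + α) / 2 := ⟨⟨_, hμint⟩, rfl⟩
  set I := Ideal.span {(s : 𝓞 K), μ}
  set S := algebraMap (𝓞 K) K '' (I : Set (𝓞 K))
  have hsI : (s : 𝓞 K) ∈ I := Ideal.subset_span (by simp)
  have hμS : (s + α) / 2 ∈ S := ⟨μ, Ideal.subset_span (by simp), hμ⟩
  have hνS : (s - α) / 2 ∈ S :=
    ⟨s - μ, I.sub_mem hsI (Ideal.subset_span (by simp)), by
      rw [map_sub, map_intCast, ← RingOfIntegers.coe_eq_algebraMap, hμ]; ring⟩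
  have hsqμ : sqNorm K ((s + α) / 2) = ((s ^ 2 + D) / 2 : ℚ) := by
    simpa using sqNorm_half_add_mul hα hD hrank (by omega) s 1
  have hsqν : sqNorm K ((s - α) / 2) = ((s ^ 2 + D) / 2 : ℚ) := by
    simpa [sub_eq_add_neg] using sqNorm_half_add_mul hα hD hrank (by omega) s (-1)
  have hμ0 : (s + α) / 2 ≠ 0 := by
    intro h
    apply ratCast_ne_sqrt hα hD (-s)
    push_cast
    linear_combination -2 * h
  have hmin : latMin K S = sqNorm K ((s + α) / 2) := by
    refine latMin_eq_of_forall_le hμS hμ0 ?_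
    rintro _ ⟨y, hyI, rfl⟩ hy0
    rw [hsqμ]
    exact sqNorm_le_of_mem_span_pair hα hD hrank (by omega) hsf hD4 hst hs hts hs3 hμ hyI hy0
  refine ⟨I, fun hI ↦ ?_, isWellRounded_of_span_minVecs ?_⟩
  · rw [hI, Ideal.mem_bot] at hsI
    simp at hsI
    omega
  · rw [eq_top_iff, ← span_half_add_sub_eq_top hα hD hrank hs.ne']
    refine Submodule.span_mono (Set.pair_subset ⟨hμS, hmin.symm⟩ ⟨hνS, ?_⟩)
    rw [hmin, hsqμ, hsqν]

end QuadraticField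

theorem Nat.exists_squarefree_mul_gt (N : ℕ) :
    ∃ s t : ℕ, N < s * t ∧ 0 < s ∧ t ≤ 3 * s ∧ s ≤ 3 * t ∧ Squarefree (s * t) ∧
      s * t % 4 = 1 := by
  obtain ⟨p, hNp, hp⟩ := Nat.exists_infinite_primes (N + 5)
  obtain ⟨q, hq, hpq, hq2p⟩ := Nat.exists_prime_lt_and_le_two_mul p hp.ne_zero
  have hpq' : Nat.Coprime p q := (Nat.coprime_primes hp hq).mpr hpq.ne
  have h3pq : Nat.Coprime 3 (p * q) := Nat.Coprime.mul_right
    ((Nat.coprime_primes Nat.prime_three hp).mpr (by omega))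
    ((Nat.coprime_primes Nat.prime_three hq).mpr (by omega))
  have hsf : Squarefree (p * q) :=
    (Nat.squarefree_mul hpq').mpr ⟨hp.squarefree, hq.squarefree⟩
  have hodd : Odd (p * q) :=
    Nat.odd_mul.mpr ⟨hp.odd_of_ne_two (by omega), hq.odd_of_ne_two (by omega)⟩
  have hN : N < p * q := by nlinarith
  rcases Nat.odd_mod_four_iff.mp (Nat.odd_iff.mp hodd) with h | h
  · exact ⟨p, q, hN, hp.pos, by omega, by omega, hsf, h⟩
  · refine ⟨3 * p, q, by nlinarith, by omega, by omega, by omega, ?_, ?_⟩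
    · rw [mul_assoc]
      exact (Nat.squarefree_mul h3pq).mpr ⟨Nat.prime_three.squarefree, hsf⟩
    · rw [mul_assoc, Nat.mul_mod, h]

/-- There exist infinitely many squarefree integers `D > 1` with `D ≡ 1 (mod 4)`
such that the ring of integers of the real quadratic field `K = ℚ(√D)` contains
a nonzero ideal `I` for which the planar lattice `Λ_K(I)` is well-rounded. -/
theorem statement1 :
    {D : ℤ | 1 < D ∧ Squarefree D ∧ D % 4 = 1 ∧
      ∀ (K : Type) [Field K] [NumberField K],
        Module.finrank ℚ K = 2 → (∃ α : K, α ^ 2 = ((D : ℤ) : K)) →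
        ∃ I : Ideal (𝓞 K), I ≠ ⊥ ∧
          IsWellRounded K (algebraMap (𝓞 K) K '' (I : Set (𝓞 K)))}.Infinite := by
  refine Set.infinite_of_forall_exists_gt fun a ↦ ?_
  obtain ⟨s, t, hN, hs, hts, hst, hsf, hD4⟩ := Nat.exists_squarefree_mul_gt (a.toNat + 1)
  have hD1 : 1 < (s : ℤ) * t := by omega
  have hsf' : Squarefree ((s : ℤ) * t) := by exact_mod_cast Int.squarefree_natCast.mpr hsf
  have hD4' : (s : ℤ) * t % 4 = 1 := by omega
  refine ⟨s * t, ⟨hD1, hsf', hD4', fun K _ _ hrank ⟨α, hα⟩ ↦ ?_⟩, by omega⟩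
  exact QuadraticField.exists_isWellRounded_ideal hα hsf' hD1 hD4' hrank rfl
    (by omega) (by omega) (by omega)
end

section
/- A full-rank lattice Λ ⊂ ℝ² has exactly 6 minimal vectors if and only if Λ is similar to the hexagonal lattice Λ_h. -/
/-- The minimum `|Λ|` of a planar lattice `Λ = S ⊆ ℝ²`: the infimum of squared
Euclidean norms of nonzero points. -/
noncomputable def pMin (S : Set (EuclideanSpace ℝ (Fin 2))) : ℝ :=
  sInf {r : ℝ | ∃ x ∈ S, x ≠ 0 ∧ ‖x‖ ^ 2 = r}

/-- The set of minimal vectors `S(Λ)` of a planar lattice. -/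
def pMinVecs (S : Set (EuclideanSpace ℝ (Fin 2))) : Set (EuclideanSpace ℝ (Fin 2)) :=
  {x ∈ S | ‖x‖ ^ 2 = pMin S}

/-- A planar lattice is well-rounded if its minimal vectors span `ℝ²`. -/
def pIsWellRounded (S : Set (EuclideanSpace ℝ (Fin 2))) : Prop :=
  Submodule.span ℝ (pMinVecs S) = ⊤

/-- Two subsets of `ℝ²` are similar if one is obtained from the other by applying
an orthogonal transformation and multiplying by a nonzero scalar. -/
def pSimilar (S T : Set (EuclideanSpace ℝ (Fin 2))) : Prop :=
  ∃ (α : ℝ) (f : EuclideanSpace ℝ (Fin 2) ≃ₗᵢ[ℝ] EuclideanSpace ℝ (Fin 2)),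
    α ≠ 0 ∧ T = (fun x => α • f x) '' S

/-- The vector `(a, b)` in `ℝ²` with its Euclidean structure. -/
noncomputable def vec2 (a b : ℝ) : EuclideanSpace ℝ (Fin 2) :=
  (WithLp.equiv 2 (Fin 2 → ℝ)).symm ![a, b]

/-- The hexagonal lattice, spanned over `ℤ` by `(1,0)` and `(1/2, √3/2)`. -/
noncomputable def hexLattice : Submodule ℤ (EuclideanSpace ℝ (Fin 2)) :=
  Submodule.span ℤ {vec2 1 0, vec2 (1/2) (Real.sqrt 3 / 2)}

/-!
Let `m` be the minimum of `Λ`. For minimal vectors `u ≠ ±v`, the lattice vectors `u ± v` have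
squared norm at least `m`, which gives `|⟪u, v⟫| ≤ m / 2`; rounding real coordinates then shows
that `u, v` is a `ℤ`-basis of `Λ`. With five or more minimal vectors we can pick three, `a, b, c`,
pairwise different up to sign. Their Gram determinant vanishes since they lie in a plane, i.e.
`m (P² + Q² + R²) = m³ + 2PQR` for their inner products `P, Q, R`, and with `|P|, |Q|, |R| ≤ m / 2`
this forces `|P| = m / 2`. So, after replacing `b` by `-b`, `Λ` has a basis with the Gram matrix
of the hexagonal lattice. Conversely, the minimal vectors of `Λ_h` correspond to the six integer
solutions of `s² + st + t² = 1`, and similarities preserve the number of minimal vectors.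
-/

open scoped RealInnerProductSpace

local notation "ℝ²" => EuclideanSpace ℝ (Fin 2)

section InnerProductSpace

variable {E F : Type*} [NormedAddCommGroup E] [InnerProductSpace ℝ E]
  [NormedAddCommGroup F] [InnerProductSpace ℝ F]

lemma linearIndependent_pair_of_inner_sq_lt {x y : E} (h : ⟪x, y⟫ ^ 2 < ‖x‖ ^ 2 * ‖y‖ ^ 2) :
    LinearIndependent ℝ ![x, y] := by
  rw [← Matrix.det_gram_ne_zero_iff_linearIndependent, Matrix.det_fin_two]
  simp only [Matrix.gram, Matrix.of_apply, Matrix.cons_val_zero, Matrix.cons_val_one,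
    real_inner_self_eq_norm_sq, real_inner_comm x y]
  nlinarith

lemma linearIndependent_of_equilateral {x y : E} {m : ℝ} (hm : 0 < m) (hx : ‖x‖ ^ 2 = m)
    (hy : ‖y‖ ^ 2 = m) (hxy : ⟪x, y⟫ = m / 2) : LinearIndependent ℝ ![x, y] :=
  linearIndependent_pair_of_inner_sq_lt (by rw [hx, hy, hxy]; nlinarith)

lemma gram_identity_of_finrank_eq_two [FiniteDimensional ℝ E] (hE : Module.finrank ℝ E = 2)
    {m : ℝ} {x y z : E} (hx : ‖x‖ ^ 2 = m) (hy : ‖y‖ ^ 2 = m) (hz : ‖z‖ ^ 2 = m) :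
    m * (⟪x, y⟫ ^ 2 + ⟪x, z⟫ ^ 2 + ⟪y, z⟫ ^ 2) = m ^ 3 + 2 * ⟪x, y⟫ * ⟪x, z⟫ * ⟪y, z⟫ := by
  have hdep : ¬LinearIndependent ℝ ![x, y, z] := fun h => by
    simpa [hE] using h.fintype_card_le_finrank
  rw [← Matrix.det_gram_ne_zero_iff_linearIndependent, not_not, Matrix.det_fin_three] at hdep
  simp only [Matrix.gram, Matrix.of_apply, Matrix.cons_val_zero, Matrix.cons_val_one,
    Matrix.cons_val, real_inner_self_eq_norm_sq, hx, hy, hz, real_inner_comm x y,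
    real_inner_comm x z, real_inner_comm y z] at hdep
  linear_combination -hdep

lemma norm_sq_smul_add_smul_lt {x y : E} {m s t : ℝ} (hm : 0 < m) (hx : ‖x‖ ^ 2 = m)
    (hy : ‖y‖ ^ 2 = m) (hxy : |⟪x, y⟫| ≤ m / 2) (hs : |s| ≤ 1 / 2) (ht : |t| ≤ 1 / 2) :
    ‖s • x + t • y‖ ^ 2 < m := by
  have hst : s * t * ⟪x, y⟫ ≤ m / 8 := by
    calc s * t * ⟪x, y⟫ ≤ |s| * |t| * |⟪x, y⟫| := by
          rw [← abs_mul, ← abs_mul]; exact le_abs_self _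
      _ ≤ 1 / 2 * (1 / 2) * (m / 2) := by gcongr
      _ = m / 8 := by ring
  have hs2 : s ^ 2 ≤ 1 / 4 := by nlinarith [sq_abs s, abs_nonneg s]
  have ht2 : t ^ 2 ≤ 1 / 4 := by nlinarith [sq_abs t, abs_nonneg t]
  rw [norm_add_sq_real, norm_smul, norm_smul, mul_pow, mul_pow, hx, hy, real_inner_smul_left,
    real_inner_smul_right, Real.norm_eq_abs, Real.norm_eq_abs, sq_abs, sq_abs]
  nlinarith

lemma norm_sq_zsmul_add_zsmul_of_equilateral {x y : E} {m : ℝ} (hx : ‖x‖ ^ 2 = m) (hy : ‖y‖ ^ 2 = m)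
    (hxy : ⟪x, y⟫ = m / 2) (s t : ℤ) :
    ‖s • x + t • y‖ ^ 2 = m * ((s ^ 2 + s * t + t ^ 2 : ℤ) : ℝ) := by
  rw [← Int.cast_smul_eq_zsmul ℝ, ← Int.cast_smul_eq_zsmul ℝ, norm_add_sq_real, norm_smul,
    norm_smul, mul_pow, mul_pow, hx, hy, real_inner_smul_left, real_inner_smul_right, hxy,
    Real.norm_eq_abs, Real.norm_eq_abs, sq_abs, sq_abs]
  push_cast
  ring

lemma exists_linearIsometryEquiv_basis_of_inner_eq {ι : Type*} (b : Module.Basis ι ℝ E)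
    (b' : Module.Basis ι ℝ F) (h : ∀ i j, ⟪b i, b j⟫ = ⟪b' i, b' j⟫) :
    ∃ f : E ≃ₗᵢ[ℝ] F, ∀ i, f (b i) = b' i := by
  let e := b.equiv b' (Equiv.refl ι)
  have he : ∀ i, e (b i) = b' i := fun i => by simp [e]
  have hinner : (innerₛₗ ℝ).compl₁₂ (e : E →ₗ[ℝ] F) (e : E →ₗ[ℝ] F) = innerₛₗ ℝ :=
    LinearMap.ext_basis b b fun i j => by
      simp only [LinearMap.compl₁₂_apply, LinearEquiv.coe_coe, he]
      exact (h i j).symm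
  refine ⟨e.isometryOfInner fun x y => ?_, he⟩
  exact LinearMap.congr_fun₂ hinner x y

lemma exists_linearIsometryEquiv_of_equilateral [FiniteDimensional ℝ E]
    (hE : Module.finrank ℝ E = 2) {a b a' b' : E} {m : ℝ} (hm : 0 < m)
    (ha : ‖a‖ ^ 2 = m) (hb : ‖b‖ ^ 2 = m) (hab : ⟪a, b⟫ = m / 2)
    (ha' : ‖a'‖ ^ 2 = m) (hb' : ‖b'‖ ^ 2 = m) (hab' : ⟪a', b'⟫ = m / 2) :
    ∃ f : E ≃ₗᵢ[ℝ] E, f a = a' ∧ f b = b' := by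
  let B := basisOfLinearIndependentOfCardEqFinrank
    (linearIndependent_of_equilateral hm ha hb hab) (by simp [hE])
  let B' := basisOfLinearIndependentOfCardEqFinrank
    (linearIndependent_of_equilateral hm ha' hb' hab') (by simp [hE])
  obtain ⟨f, hf⟩ := exists_linearIsometryEquiv_basis_of_inner_eq B B' fun i j => by
    fin_cases i <;> fin_cases j <;>
      simp [B, B', ha, hb, hab, ha', hb', hab', real_inner_comm a b, real_inner_comm a' b']
  exact ⟨f, by simpa [B, B'] using hf 0, by simpa [B, B'] using hf 1⟩

end InnerProductSpace

lemma abs_eq_half_of_gram_identity {m p q r : ℝ} (hm : 0 < m) (hp : |p| ≤ m / 2)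
    (hq : |q| ≤ m / 2) (hr : |r| ≤ m / 2)
    (h : m * (p ^ 2 + q ^ 2 + r ^ 2) = m ^ 3 + 2 * p * q * r) : |p| = m / 2 := by
  have hp2 : p ^ 2 ≤ m ^ 2 / 4 := by nlinarith [sq_abs p, abs_nonneg p]
  have hq2 : q ^ 2 ≤ m ^ 2 / 4 := by nlinarith [sq_abs q, abs_nonneg q]
  have hr2 : r ^ 2 ≤ m ^ 2 / 4 := by nlinarith [sq_abs r, abs_nonneg r]
  have hpqr : -(m ^ 3 / 8) ≤ p * q * r := by
    have : |p * q * r| ≤ m / 2 * (m / 2) * (m / 2) := by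
      rw [abs_mul, abs_mul]; gcongr
    linarith [neg_abs_le (p * q * r)]
  have : m ^ 2 / 4 ≤ p ^ 2 := by nlinarith
  nlinarith [sq_abs p, abs_nonneg p]

lemma one_le_sq_add_mul_add_sq {s t : ℤ} (h : (s, t) ≠ 0) : 1 ≤ s ^ 2 + s * t + t ^ 2 := by
  rcases eq_or_ne t 0 with rfl | ht
  · have hs : s ≠ 0 := fun hs => h (by simp [hs])
    nlinarith [Int.one_le_abs hs, sq_abs s]
  · nlinarith [Int.one_le_abs ht, sq_abs t, sq_nonneg (2 * s + t)]

-- `(s, t) ↦ s + t ω` with `ω = e^(iπ/3)` identifies these with the units of `ℤ[ω]`,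
-- whose norm form is `s² + st + t²`.
def eisensteinUnits : Finset (ℤ × ℤ) := {(1, 0), (0, 1), (-1, 1), (-1, 0), (0, -1), (1, -1)}

lemma sq_add_mul_add_sq_eq_one_iff {s t : ℤ} :
    s ^ 2 + s * t + t ^ 2 = 1 ↔ (s, t) ∈ eisensteinUnits := by
  constructor
  · intro h
    obtain ⟨hs₁, hs₂⟩ : -1 ≤ s ∧ s ≤ 1 := by constructor <;> nlinarith [sq_nonneg (s + 2 * t)]
    obtain ⟨ht₁, ht₂⟩ : -1 ≤ t ∧ t ≤ 1 := by constructor <;> nlinarith [sq_nonneg (2 * s + t)]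
    interval_cases s <;> interval_cases t <;> simp_all [eisensteinUnits]
  · intro h
    fin_cases h <;> norm_num

lemma Set.exists_three_ne_of_four_lt_ncard {α : Type*} [InvolutiveNeg α] {S : Set α}
    (h : 4 < S.ncard) :
    ∃ a ∈ S, ∃ b ∈ S, ∃ c ∈ S, a ≠ b ∧ a ≠ -b ∧ a ≠ c ∧ a ≠ -c ∧ b ≠ c ∧ b ≠ -c := by
  classical
  have hnotMem : ∀ s : Finset α, s.card < S.ncard → ∃ x ∈ S, x ∉ (s : Set α) := fun s hs =>
    Set.exists_mem_notMem_of_ncard_lt_ncard (by rwa [Set.ncard_coe_finset])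
  obtain ⟨a, ha, -⟩ := hnotMem ∅ (by rw [Finset.card_empty]; omega)
  obtain ⟨b, hb, hab⟩ := hnotMem {a, -a} (Finset.card_le_two.trans_lt (by omega))
  obtain ⟨c, hc, habc⟩ := hnotMem {a, -a, b, -b} (Finset.card_le_four.trans_lt h)
  simp only [Finset.coe_insert, Finset.coe_singleton, Set.mem_insert_iff, Set.mem_singleton_iff,
    not_or] at hab habc
  refine ⟨a, ha, b, hb, c, hc, Ne.symm hab.1, fun h => hab.2 (by rw [h, neg_neg]), Ne.symm habc.1,
    fun h => habc.2.1 (by rw [h, neg_neg]), Ne.symm habc.2.2.1,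
    fun h => habc.2.2.2 (by rw [h, neg_neg])⟩

lemma pMin_le_norm_sq {S : Set ℝ²} {z : ℝ²} (hz : z ∈ S) (hz0 : z ≠ 0) : pMin S ≤ ‖z‖ ^ 2 :=
  csInf_le ⟨0, fun _ ⟨_, _, _, hx⟩ => hx ▸ sq_nonneg _⟩ ⟨z, hz, hz0, rfl⟩

open scoped Pointwise in

lemma pMin_image_smul_linearIsometryEquiv (S : Set ℝ²) {α : ℝ} (hα : α ≠ 0)
    (f : ℝ² ≃ₗᵢ[ℝ] ℝ²) : pMin ((fun x => α • f x) '' S) = α ^ 2 * pMin S := by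
  have hset : {r : ℝ | ∃ y ∈ (fun x => α • f x) '' S, y ≠ 0 ∧ ‖y‖ ^ 2 = r}
      = α ^ 2 • {r : ℝ | ∃ x ∈ S, x ≠ 0 ∧ ‖x‖ ^ 2 = r} := by
    ext r
    simp [Set.mem_smul_set, hα, norm_smul, mul_pow, and_assoc]
  rw [pMin, hset, Real.sInf_smul_of_nonneg (sq_nonneg α)]
  rfl

lemma pMinVecs_image_smul_linearIsometryEquiv (S : Set ℝ²) {α : ℝ} (hα : α ≠ 0)
    (f : ℝ² ≃ₗᵢ[ℝ] ℝ²) :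
    pMinVecs ((fun x => α • f x) '' S) = (fun x => α • f x) '' pMinVecs S := by
  ext y
  simp only [pMinVecs, pMin_image_smul_linearIsometryEquiv S hα f, Set.mem_ofPred_eq,
    Set.mem_image]
  constructor
  · rintro ⟨⟨x, hx, rfl⟩, hy⟩
    refine ⟨x, ⟨hx, mul_left_cancel₀ (pow_ne_zero 2 hα) ?_⟩, rfl⟩
    simpa [norm_smul, mul_pow] using hy
  · rintro ⟨x, ⟨hx, hxm⟩, rfl⟩
    exact ⟨⟨x, hx, rfl⟩, by simp [norm_smul, mul_pow, hxm]⟩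

lemma ncard_pMinVecs_eq_of_pSimilar {S T : Set ℝ²} (h : pSimilar S T) :
    (pMinVecs T).ncard = (pMinVecs S).ncard := by
  obtain ⟨α, f, hα, rfl⟩ := h
  rw [pMinVecs_image_smul_linearIsometryEquiv S hα f]
  exact Set.ncard_image_of_injective _ fun x y hxy => f.injective (smul_right_injective _ hα hxy)

section MinimalVectors

variable {L : Submodule ℤ ℝ²} {u v : ℝ²}

lemma abs_inner_le_of_mem_pMinVecs (hu : u ∈ pMinVecs L) (hv : v ∈ pMinVecs L)
    (h₁ : u ≠ v) (h₂ : u ≠ -v) : |⟪u, v⟫| ≤ pMin L / 2 := by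
  have hsub := pMin_le_norm_sq (L.sub_mem hu.1 hv.1) (sub_ne_zero.mpr h₁)
  have hadd := pMin_le_norm_sq (L.add_mem hu.1 hv.1) (fun h => h₂ (eq_neg_of_add_eq_zero_left h))
  rw [norm_sub_sq_real, hu.2, hv.2] at hsub
  rw [norm_add_sq_real, hu.2, hv.2] at hadd
  rw [abs_le]
  constructor <;> linarith

lemma pMin_pos_of_mem_pMinVecs (hu : u ∈ pMinVecs L) (hv : v ∈ pMinVecs L) (h : u ≠ v) :
    0 < pMin L := by
  have hu2 : ‖u‖ ^ 2 = pMin L := hu.2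
  have hv2 : ‖v‖ ^ 2 = pMin L := hv.2
  refine (hu2 ▸ sq_nonneg ‖u‖).lt_of_ne fun h0 => h ?_
  rw [← h0, sq_eq_zero_iff, norm_eq_zero] at hu2 hv2
  rw [hu2, hv2]

lemma linearIndependent_of_mem_pMinVecs (hu : u ∈ pMinVecs L) (hv : v ∈ pMinVecs L)
    (h₁ : u ≠ v) (h₂ : u ≠ -v) : LinearIndependent ℝ ![u, v] := by
  have hm := pMin_pos_of_mem_pMinVecs hu hv h₁
  have hP := abs_inner_le_of_mem_pMinVecs hu hv h₁ h₂
  apply linearIndependent_pair_of_inner_sq_lt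
  rw [hu.2, hv.2, ← sq_abs]
  nlinarith [abs_nonneg ⟪u, v⟫]

lemma span_int_eq_of_mem_pMinVecs (hu : u ∈ pMinVecs L) (hv : v ∈ pMinVecs L)
    (h₁ : u ≠ v) (h₂ : u ≠ -v) : Submodule.span ℤ {u, v} = L := by
  refine le_antisymm (Submodule.span_le.mpr (Set.pair_subset hu.1 hv.1)) fun z hz => ?_
  have hspan := (linearIndependent_of_mem_pMinVecs hu hv h₁ h₂).span_eq_top_of_card_eq_finrank
    (by simp)
  rw [Matrix.range_cons_cons_empty] at hspan
  obtain ⟨s, t, rfl⟩ := Submodule.mem_span_pair.mp (hspan ▸ Submodule.mem_top : z ∈ _)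
  set a := round s
  set b := round t
  have hab : (a : ℝ) • u + (b : ℝ) • v ∈ L := by
    simpa only [Int.cast_smul_eq_zsmul] using L.add_mem (L.smul_mem a hu.1) (L.smul_mem b hv.1)
  have hdiff : (s - a) • u + (t - b) • v = 0 := by
    by_contra hne
    have hmem : (s - a) • u + (t - b) • v ∈ L := by
      convert L.sub_mem hz hab using 1
      simp only [sub_smul]
      abel
    have hlt := norm_sq_smul_add_smul_lt (pMin_pos_of_mem_pMinVecs hu hv h₁) hu.2 hv.2
      (abs_inner_le_of_mem_pMinVecs hu hv h₁ h₂) (abs_sub_round s) (abs_sub_round t)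
    exact (pMin_le_norm_sq hmem hne).not_gt hlt
  have hz : s • u + t • v = a • u + b • v := by
    rw [← Int.cast_smul_eq_zsmul ℝ, ← Int.cast_smul_eq_zsmul ℝ, ← sub_eq_zero, ← hdiff]
    simp only [sub_smul]
    abel
  rw [hz]
  exact Submodule.mem_span_pair.mpr ⟨a, b, rfl⟩

end MinimalVectors

noncomputable def hexV : ℝ² := vec2 1 0

noncomputable def hexW : ℝ² := vec2 (1 / 2) (√3 / 2)

lemma hexLattice_eq_span : hexLattice = Submodule.span ℤ {hexV, hexW} := rfl

lemma inner_vec2 (a b c d : ℝ) : ⟪vec2 a b, vec2 c d⟫ = a * c + b * d := by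
  simp [vec2, PiLp.inner_apply, Fin.sum_univ_two]
  ring

lemma norm_sq_hexV : ‖hexV‖ ^ 2 = 1 := by
  rw [← real_inner_self_eq_norm_sq, hexV, inner_vec2]
  norm_num

lemma norm_sq_hexW : ‖hexW‖ ^ 2 = 1 := by
  rw [← real_inner_self_eq_norm_sq, hexW, inner_vec2]
  have h3 : √3 * √3 = 3 := Real.mul_self_sqrt (by norm_num)
  linear_combination h3 / 4

lemma inner_hexV_hexW : ⟪hexV, hexW⟫ = 1 / 2 := by
  rw [hexV, hexW, inner_vec2]
  norm_num

lemma norm_sq_zsmul_hexV_add_zsmul_hexW (s t : ℤ) :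
    ‖s • hexV + t • hexW‖ ^ 2 = ((s ^ 2 + s * t + t ^ 2 : ℤ) : ℝ) := by
  rw [norm_sq_zsmul_add_zsmul_of_equilateral norm_sq_hexV norm_sq_hexW
    inner_hexV_hexW, one_mul]

lemma mem_hexLattice {z : ℝ²} : z ∈ hexLattice ↔ ∃ s t : ℤ, s • hexV + t • hexW = z :=
  Submodule.mem_span_pair

lemma pMin_hexLattice : pMin hexLattice = 1 := by
  have hV : hexV ∈ hexLattice := mem_hexLattice.mpr ⟨1, 0, by simp⟩
  have hV0 : hexV ≠ 0 := fun h => by simpa [h] using norm_sq_hexV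
  refine le_antisymm (norm_sq_hexV ▸ pMin_le_norm_sq hV hV0)
    (le_csInf ⟨_, hexV, hV, hV0, rfl⟩ ?_)
  rintro r ⟨z, hz, hz0, rfl⟩
  obtain ⟨s, t, rfl⟩ := mem_hexLattice.mp hz
  rw [norm_sq_zsmul_hexV_add_zsmul_hexW]
  exact_mod_cast one_le_sq_add_mul_add_sq fun h => hz0 (by simp_all [Prod.ext_iff])

lemma pMinVecs_hexLattice :
    pMinVecs hexLattice = (fun p : ℤ × ℤ => p.1 • hexV + p.2 • hexW) '' eisensteinUnits := by
  ext z
  simp only [pMinVecs, pMin_hexLattice, Set.mem_ofPred_eq, SetLike.mem_coe, mem_hexLattice,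
    Set.mem_image, Prod.exists]
  constructor
  · rintro ⟨⟨s, t, rfl⟩, hz⟩
    rw [norm_sq_zsmul_hexV_add_zsmul_hexW] at hz
    exact ⟨s, t, sq_add_mul_add_sq_eq_one_iff.mp (by exact_mod_cast hz), rfl⟩
  · rintro ⟨s, t, hst, rfl⟩
    refine ⟨⟨s, t, rfl⟩, ?_⟩
    rw [norm_sq_zsmul_hexV_add_zsmul_hexW]
    exact_mod_cast sq_add_mul_add_sq_eq_one_iff.mpr hst

lemma ncard_pMinVecs_hexLattice : (pMinVecs hexLattice).ncard = 6 := by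
  have hli : LinearIndependent ℤ ![hexV, hexW] :=
    (linearIndependent_of_equilateral one_pos norm_sq_hexV norm_sq_hexW
      inner_hexV_hexW).restrict_scalars' ℤ
  rw [pMinVecs_hexLattice, Set.ncard_image_of_injective _ fun p q h => Prod.ext_iff.mpr
    (hli.eq_of_pair h), Set.ncard_coe_finset]
  rfl

lemma pSimilar_span_int_hexLattice {a b : ℝ²} {m : ℝ} (hm : 0 < m) (ha : ‖a‖ ^ 2 = m)
    (hb : ‖b‖ ^ 2 = m) (hab : ⟪a, b⟫ = m / 2) :
    pSimilar (Submodule.span ℤ {a, b}) hexLattice := by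
  set r := √m
  have hr : r ≠ 0 := (Real.sqrt_pos.2 hm).ne'
  have hr2 : r ^ 2 = m := Real.sq_sqrt hm.le
  obtain ⟨f, hfa, hfb⟩ := exists_linearIsometryEquiv_of_equilateral (by simp) hm ha hb hab
    (a' := r • hexV) (b' := r • hexW)
    (by rw [norm_smul, mul_pow, norm_sq_hexV, Real.norm_eq_abs, sq_abs, hr2, mul_one])
    (by rw [norm_smul, mul_pow, norm_sq_hexW, Real.norm_eq_abs, sq_abs, hr2, mul_one])
    (by rw [real_inner_smul_left, real_inner_smul_right, inner_hexV_hexW, ← hr2]; ring)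
  refine ⟨r⁻¹, f, inv_ne_zero hr, ?_⟩
  let g : ℝ² →ₗ[ℤ] ℝ² := (r⁻¹ • (f : ℝ² →ₗ[ℝ] ℝ²)).restrictScalars ℤ
  change _ = g '' _
  rw [← Submodule.map_coe, Submodule.map_span, Set.image_pair, hexLattice_eq_span]
  simp [g, hfa, hfb, smul_smul, hr]

lemma pSimilar_hexLattice_of_four_lt_ncard {L : Submodule ℤ ℝ²}
    (h : 4 < (pMinVecs L).ncard) : pSimilar L hexLattice := by
  obtain ⟨a, ha, b, hb, c, hc, hab, hab', hac, hac', hbc, hbc'⟩ :=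
    Set.exists_three_ne_of_four_lt_ncard h
  have hm := pMin_pos_of_mem_pMinVecs ha hb hab
  have hgram := gram_identity_of_finrank_eq_two (by simp) ha.2 hb.2 hc.2
  have hP := abs_eq_half_of_gram_identity hm (abs_inner_le_of_mem_pMinVecs ha hb hab hab')
    (abs_inner_le_of_mem_pMinVecs ha hc hac hac') (abs_inner_le_of_mem_pMinVecs hb hc hbc hbc')
    hgram
  rcases eq_or_eq_neg_of_abs_eq hP with hP | hP
  · rw [← span_int_eq_of_mem_pMinVecs ha hb hab hab']
    exact pSimilar_span_int_hexLattice hm ha.2 hb.2 hP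
  · have hb' : -b ∈ pMinVecs L := ⟨L.neg_mem hb.1, by rw [norm_neg]; exact hb.2⟩
    rw [← span_int_eq_of_mem_pMinVecs ha hb' hab' (by rwa [neg_neg])]
    exact pSimilar_span_int_hexLattice hm ha.2 hb'.2 (by rw [inner_neg_right, hP]; ring)

theorem statement8_general (L : Submodule ℤ (EuclideanSpace ℝ (Fin 2))) :
    (pMinVecs (L : Set (EuclideanSpace ℝ (Fin 2)))).ncard = 6 ↔
      pSimilar (L : Set (EuclideanSpace ℝ (Fin 2)))
        (hexLattice : Set (EuclideanSpace ℝ (Fin 2))) := by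
  refine ⟨fun h6 => pSimilar_hexLattice_of_four_lt_ncard (by omega), fun h => ?_⟩
  rw [← ncard_pMinVecs_eq_of_pSimilar h, ncard_pMinVecs_hexLattice]

/-- A full-rank lattice `Λ ⊂ ℝ²` has exactly 6 minimal vectors if and only if `Λ`
is similar to the hexagonal lattice. -/
theorem statement8 (L : Submodule ℤ (EuclideanSpace ℝ (Fin 2)))
    [DiscreteTopology L] [IsZLattice ℝ L] :
    (pMinVecs (L : Set (EuclideanSpace ℝ (Fin 2)))).ncard = 6 ↔
      pSimilar (L : Set (EuclideanSpace ℝ (Fin 2)))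
        (hexLattice : Set (EuclideanSpace ℝ (Fin 2))) :=
  statement8_general L
end

section
/- Let D ≠ 1 be a squarefree integer and K = ℚ(√D). The lattice Λ_D := σ(O_K) ⊂ ℝ² is well-rounded if and only if D = -1 or D = -3. -/
/-!
If all infinite places `w` of `K` have the same multiplicity, then `∏ w, w x ≥ 1` for every
nonzero integer `x`, and summing `log t ≤ t - 1` over `t = (w x)²` gives
`‖σ x‖² = ∑ w, (w x)² ≥ #places = ‖σ 1‖²`, with equality exactly when `w x = 1` for all `w`.

For `D > 0` the field is totally real, so a minimal vector satisfies `x² = 1` and all minimal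
vectors lie on the line `ℝ σ(1)`. For `D < 0` there is a single complex place and a minimal vector
`x = q + r√D` has absolute value `1`: its trace `2q` is an integer and its norm `q² - Dr²` is `1`,
so `D (2r)² = (2q)² - 4`. For squarefree `D`, this forces `2r ∈ ℤ`, and `r ≠ 0` then leaves only
`D = -1` and `D = -3`, where `√-1` and `(1 + √-3)/2` are roots of unity off the real line.
-/

open NumberField

open NumberField NumberField.InfinitePlace Module

section SumOfSquares

variable {ι : Type*} [Fintype ι] {y : ι → ℝ}

theorem sum_log_sq_nonneg_of_one_le_prod (h : 1 ≤ ∏ i, y i) :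
    0 ≤ ∑ i, Real.log (y i ^ 2) := by
  have hy0 : ∀ i ∈ Finset.univ, y i ^ 2 ≠ 0 := fun i _ ↦
    pow_ne_zero 2 (Finset.prod_ne_zero_iff.mp (by positivity) i (Finset.mem_univ i))
  rw [← Real.log_prod hy0, Finset.prod_pow]
  exact Real.log_nonneg (one_le_pow₀ h)

theorem pos_of_one_le_prod (hy : ∀ i, 0 ≤ y i) (h : 1 ≤ ∏ i, y i) (i : ι) : 0 < y i :=
  (hy i).lt_of_ne' (Finset.prod_ne_zero_iff.mp (by positivity) i (Finset.mem_univ i))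

theorem card_le_sum_sq_of_one_le_prod (hy : ∀ i, 0 ≤ y i) (h : 1 ≤ ∏ i, y i) :
    (Fintype.card ι : ℝ) ≤ ∑ i, y i ^ 2 := by
  have hlog : ∑ i, Real.log (y i ^ 2) ≤ ∑ i, (y i ^ 2 - 1) :=
    Finset.sum_le_sum fun i _ ↦ Real.log_le_sub_one_of_pos (pow_pos (pos_of_one_le_prod hy h i) 2)
  simp only [Finset.sum_sub_distrib, Finset.sum_const, Finset.card_univ, nsmul_eq_mul,
    mul_one] at hlog
  linarith [sum_log_sq_nonneg_of_one_le_prod h]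

theorem eq_one_of_sum_sq_le_card (hy : ∀ i, 0 ≤ y i) (h : 1 ≤ ∏ i, y i)
    (hle : ∑ i, y i ^ 2 ≤ Fintype.card ι) (i : ι) : y i = 1 := by
  by_contra hi
  have hlog : ∑ i, Real.log (y i ^ 2) < ∑ i, (y i ^ 2 - 1) :=
    Finset.sum_lt_sum
      (fun j _ ↦ Real.log_le_sub_one_of_pos (pow_pos (pos_of_one_le_prod hy h j) 2))
      ⟨i, Finset.mem_univ i, Real.log_lt_sub_one_of_pos (pow_pos (pos_of_one_le_prod hy h i) 2)
        ((pow_eq_one_iff_of_nonneg (hy i) two_ne_zero).not.mpr hi)⟩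
  simp only [Finset.sum_sub_distrib, Finset.sum_const, Finset.card_univ, nsmul_eq_mul,
    mul_one] at hlog
  linarith [sum_log_sq_nonneg_of_one_le_prod h]

end SumOfSquares

theorem sq_eq_one_of_isReal {K : Type*} [Field K] {w : InfinitePlace K} (hw : w.IsReal) {x : K}
    (hx : w x = 1) : x ^ 2 = 1 := by
  apply (embedding_of_isReal hw).injective
  rw [map_pow, map_one, ← sq_abs, ← Real.norm_eq_abs, norm_embedding_of_isReal, hx, one_pow]

section MinimalVectors

variable {K : Type*} [Field K] [NumberField K]

theorem latMin_eq_sqNorm {S : Set K} {x₀ : K} (hx₀ : x₀ ∈ S) (hx₀0 : x₀ ≠ 0)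
    (hmin : ∀ x ∈ S, x ≠ 0 → sqNorm K x₀ ≤ sqNorm K x) : latMin K S = sqNorm K x₀ :=
  IsLeast.csInf_eq ⟨⟨x₀, hx₀, hx₀0, rfl⟩, by rintro _ ⟨x, hx, hx0, rfl⟩; exact hmin x hx hx0⟩

theorem one_le_prod_infinitePlace {m : ℕ} (hm : ∀ w : InfinitePlace K, w.mult = m)
    {x : K} (hxO : x ∈ Set.range (algebraMap (𝓞 K) K)) (hx : x ≠ 0) :
    1 ≤ ∏ w : InfinitePlace K, w x := by
  obtain ⟨z, rfl⟩ := hxO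
  have hm0 : m ≠ 0 := hm (Classical.arbitrary _) ▸ mult_ne_zero
  have hnorm : (1 : ℝ) ≤ |Algebra.norm ℚ (z : K)| := by
    rw [← Algebra.coe_norm_int]
    exact_mod_cast Int.one_le_abs (Algebra.norm_ne_zero_iff.mpr (by rintro rfl; simp at hx))
  rw [← one_le_pow_iff_of_nonneg (by positivity) hm0, ← Finset.prod_pow]
  calc (1 : ℝ) ≤ |Algebra.norm ℚ (z : K)| := hnorm
    _ = ∏ w : InfinitePlace K, w z ^ w.mult := mod_cast (prod_eq_abs_norm _).symm
    _ = _ := by simp only [hm]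

theorem minVecs_ringOfIntegers {m : ℕ} (hm : ∀ w : InfinitePlace K, w.mult = m) :
    minVecs K (Set.range (algebraMap (𝓞 K) K)) =
      {x ∈ Set.range (algebraMap (𝓞 K) K) | ∀ w : InfinitePlace K, w x = 1} := by
  have hone : sqNorm K 1 = Fintype.card (InfinitePlace K) := by simp [sqNorm]
  have hmin : latMin K (Set.range (algebraMap (𝓞 K) K)) = Fintype.card (InfinitePlace K) := by
    rw [← hone]
    refine latMin_eq_sqNorm ⟨1, map_one _⟩ one_ne_zero fun x hxO hx ↦ ?_
    rw [hone]
    exact card_le_sum_sq_of_one_le_prod (fun w ↦ apply_nonneg w x)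
      (one_le_prod_infinitePlace hm hxO hx)
  ext x
  simp only [minVecs, hmin, Set.mem_ofPred_eq, and_congr_right_iff]
  intro hxO
  constructor
  · intro hx w
    have hx0 : x ≠ 0 := by
      rintro rfl
      have : (0 : ℝ) < Fintype.card (InfinitePlace K) := mod_cast Fintype.card_pos
      simp [sqNorm] at hx
      linarith
    exact eq_one_of_sum_sq_le_card (fun w ↦ apply_nonneg w x)
      (one_le_prod_infinitePlace hm hxO hx0) hx.le w
  · intro hx
    simp [sqNorm, hx]

theorem mem_minVecs_ringOfIntegers_of_pow_eq_one {m : ℕ}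
    (hm : ∀ w : InfinitePlace K, w.mult = m) {β : K} {n : ℕ} (hn : 0 < n) (hβ : β ^ n = 1) :
    β ∈ minVecs K (Set.range (algebraMap (𝓞 K) K)) := by
  rw [minVecs_ringOfIntegers hm]
  refine ⟨⟨⟨β, IsIntegral.of_pow hn (hβ ▸ isIntegral_one)⟩, rfl⟩, fun w ↦ ?_⟩
  rw [← pow_eq_one_iff_of_nonneg (apply_nonneg w β) hn.ne', ← map_pow, hβ, map_one]

end MinimalVectors

section WellRounded

variable {K : Type*} [Field K] [NumberField K]

theorem mixedEmbedding_algebraMap_rat (q : ℚ) :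
    mixedEmbedding K (algebraMap ℚ K q) = (q : ℝ) • (1 : mixedEmbedding.mixedSpace K) := by
  have h : (mixedEmbedding K).comp (algebraMap ℚ K) =
      (algebraMap ℝ (mixedEmbedding.mixedSpace K)).comp (algebraMap ℚ ℝ) :=
    Subsingleton.elim _ _
  rw [← Algebra.algebraMap_eq_smul_one, ← eq_ratCast (algebraMap ℚ ℝ)]
  exact RingHom.congr_fun h q

theorem not_isWellRounded_of_minVecs_subset {S : Set K} (hK : 2 ≤ finrank ℚ K)
    (h : minVecs K S ⊆ Set.range (algebraMap ℚ K)) : ¬ IsWellRounded K S := by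
  intro hwr
  have hspan : Submodule.span ℝ (mixedEmbedding K '' minVecs K S) ≤
      Submodule.span ℝ {(1 : mixedEmbedding.mixedSpace K)} := by
    rw [Submodule.span_le]
    rintro _ ⟨x, hx, rfl⟩
    obtain ⟨q, rfl⟩ := h hx
    rw [SetLike.mem_coe, mixedEmbedding_algebraMap_rat]
    exact Submodule.smul_mem _ _ (Submodule.mem_span_singleton_self _)
  have := Submodule.finrank_mono (hwr ▸ hspan)
  rw [finrank_top, mixedEmbedding.finrank, finrank_span_singleton one_ne_zero] at this
  omega

theorem IsTotallyReal.not_isWellRounded [IsTotallyReal K] (hK : 2 ≤ finrank ℚ K) :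
    ¬ IsWellRounded K (Set.range (algebraMap (𝓞 K) K)) := by
  refine not_isWellRounded_of_minVecs_subset hK ?_
  rw [minVecs_ringOfIntegers IsTotallyReal.mult_eq]
  rintro x ⟨-, hx⟩
  let w : InfinitePlace K := Classical.arbitrary _
  rcases sq_eq_one_iff.mp (sq_eq_one_of_isReal (IsTotallyReal.isReal w) (hx w)) with rfl | rfl
  exacts [⟨1, map_one _⟩, ⟨-1, by simp⟩]

theorem isWellRounded_of_one_mem_minVecs {S : Set K} (hK : finrank ℚ K = 2)
    {w : InfinitePlace K} (hw : w.IsComplex) {β : K} (h1 : 1 ∈ minVecs K S)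
    (hβ : β ∈ minVecs K S) (him : (w.embedding β).im ≠ 0) : IsWellRounded K S := by
  have hli : LinearIndependent ℝ ![mixedEmbedding K 1, mixedEmbedding K β] := by
    refine LinearIndependent.pair_iff.mpr fun s t hst ↦ ?_
    have hw' : (s : ℂ) + t * w.embedding β = 0 := by
      simpa [mixedEmbedding.mixedEmbedding_apply_isComplex, Complex.real_smul] using
        congrArg (fun p ↦ p.2 ⟨w, hw⟩) hst
    have ht : t = 0 := by
      simpa [him] using congrArg Complex.im hw'
    refine ⟨?_, ht⟩
    simpa [ht] using congrArg Complex.re hw'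
  have htop : Submodule.span ℝ (Set.range ![mixedEmbedding K 1, mixedEmbedding K β]) = ⊤ :=
    hli.span_eq_top_of_card_eq_finrank (by rw [mixedEmbedding.finrank, hK]; rfl)
  rw [IsWellRounded, eq_top_iff, ← htop]
  refine Submodule.span_mono ?_
  rintro _ ⟨i, rfl⟩
  fin_cases i
  exacts [⟨1, h1, rfl⟩, ⟨β, hβ, rfl⟩]

end WellRounded

section Arithmetic

theorem Squarefree.exists_intCast_eq_of_mul_sq_eq {D : ℤ} (hD : Squarefree D) {s : ℚ} {k : ℤ}
    (h : (D : ℚ) * s ^ 2 = k) : ∃ n : ℤ, (n : ℚ) = s := by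
  refine ⟨s.num, (Rat.den_eq_one_iff s).mp ?_⟩
  have hnum : D * s.num ^ 2 = k * (s.den : ℤ) ^ 2 := by
    have hs : (s.num : ℚ) = s * s.den := (Rat.mul_den_eq_num s).symm
    exact_mod_cast (by rw [hs]; linear_combination (s.den : ℚ) ^ 2 * h :
      (D : ℚ) * s.num ^ 2 = k * (s.den : ℚ) ^ 2)
  have hcop : IsCoprime ((s.den : ℤ) ^ 2) (s.num ^ 2) :=
    (Int.isCoprime_iff_nat_coprime.mpr (by simpa using s.reduced.symm)).pow
  have hdvd : (s.den : ℤ) * s.den ∣ D := by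
    rw [← sq]
    exact hcop.dvd_of_dvd_mul_right ⟨k, by linear_combination hnum⟩
  rcases Int.isUnit_iff.mp (hD _ hdvd) with h1 | h1 <;> omega

theorem eq_neg_one_or_eq_neg_three_of_mul_sq_eq {D s t : ℤ} (hD : Squarefree D) (hneg : D < 0)
    (hs : s ≠ 0) (h : D * s ^ 2 = t ^ 2 - 4) : D = -1 ∨ D = -3 := by
  have hD4 : D ≠ -4 := by
    rintro rfl
    exact absurd (hD 2 ⟨-1, by norm_num⟩) (by norm_num [Int.isUnit_iff])
  have hs1 : 1 ≤ s ^ 2 := by have := sq_pos_of_ne_zero hs; omega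
  have ht : -1 ≤ t ∧ t ≤ 1 := by constructor <;> nlinarith
  have hs2 : -2 ≤ s ∧ s ≤ 2 := by constructor <;> nlinarith
  obtain ⟨ht1, ht2⟩ := ht
  obtain ⟨hs3, hs4⟩ := hs2
  interval_cases t <;> interval_cases s <;> omega

theorem eq_neg_one_or_eq_neg_three_of_sq_sub_mul_sq_eq_one {D t : ℤ} {q r : ℚ}
    (hD : Squarefree D) (hneg : D < 0) (ht : (t : ℚ) = 2 * q) (h : q ^ 2 - D * r ^ 2 = 1)
    (hr : r ≠ 0) : D = -1 ∨ D = -3 := by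
  have hDs : (D : ℚ) * (2 * r) ^ 2 = t ^ 2 - 4 := by rw [ht]; linear_combination -4 * h
  obtain ⟨s, hs⟩ := hD.exists_intCast_eq_of_mul_sq_eq (k := t ^ 2 - 4) (by push_cast; exact hDs)
  refine eq_neg_one_or_eq_neg_three_of_mul_sq_eq hD hneg (s := s) (t := t) ?_ ?_
  · rintro rfl
    exact hr (by simpa using hs.symm)
  · rw [← hs] at hDs
    exact_mod_cast hDs

theorem exists_intCast_eq_of_isIntegral_ratCast {A : Type*} [Field A] [CharZero A] {c : ℚ}
    (h : IsIntegral ℤ (c : A)) : ∃ n : ℤ, (n : ℚ) = c := by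
  rw [← eq_ratCast (algebraMap ℚ A), isIntegral_algebraMap_iff (algebraMap ℚ A).injective] at h
  obtain ⟨n, hn⟩ := IsIntegrallyClosed.isIntegral_iff.mp h
  exact ⟨n, by simpa using hn⟩

end Arithmetic

theorem exists_eq_add_mul_of_finrank_eq_two {F K : Type*} [Field F] [Field K] [Algebra F K]
    (hK : finrank F K = 2) {α : K} (hα : α ∉ Set.range (algebraMap F K)) (x : K) :
    ∃ q r : F, x = algebraMap F K q + algebraMap F K r * α := by
  have hli : LinearIndependent F ![1, α] := by
    refine LinearIndependent.pair_iff.mpr fun s t hst ↦ ?_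
    rw [Algebra.smul_def, Algebra.smul_def, mul_one] at hst
    by_cases ht : t = 0
    · subst ht
      simpa using hst
    · refine absurd ⟨-s / t, ?_⟩ hα
      rw [map_div₀, map_neg, div_eq_iff (by simpa using ht)]
      linear_combination -hst
  have hx : x ∈ Submodule.span F (Set.range ![1, α]) := by
    rw [hli.span_eq_top_of_card_eq_finrank (by simp [hK])]
    exact Submodule.mem_top
  obtain ⟨c, hc⟩ := (Submodule.mem_span_range_iff_exists_fun F).mp hx
  exact ⟨c 0, c 1, by simp [← hc, Fin.sum_univ_two, Algebra.smul_def]⟩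

theorem ringHom_ext_of_finrank_eq_two {K A : Type*} [Field K] [CharZero K] [DivisionRing A]
    (hK : finrank ℚ K = 2) {α : K} (hα : α ∉ Set.range (algebraMap ℚ K)) {f g : K →+* A}
    (h : f α = g α) : f = g := by
  ext x
  obtain ⟨q, r, rfl⟩ := exists_eq_add_mul_of_finrank_eq_two hK hα x
  simp [h]

section ComplexSquareRoot

variable {z : ℂ} {d : ℝ}

theorem Complex.re_sq_sub_im_sq_and_re_mul_im_of_sq_eq (h : z ^ 2 = d) :
    z.re ^ 2 - z.im ^ 2 = d ∧ z.re * z.im = 0 := by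
  have hre := congrArg Complex.re h
  have him := congrArg Complex.im h
  simp only [sq, Complex.mul_re, Complex.mul_im, Complex.ofReal_re, Complex.ofReal_im] at hre him
  exact ⟨by linarith, by linarith⟩

theorem Complex.im_eq_zero_of_sq_eq_of_pos (h : z ^ 2 = d) (hd : 0 < d) : z.im = 0 := by
  obtain ⟨hre, hreim⟩ := Complex.re_sq_sub_im_sq_and_re_mul_im_of_sq_eq h
  rcases mul_eq_zero.mp hreim with h0 | h0
  · nlinarith
  · exact h0

theorem Complex.re_eq_zero_of_sq_eq_of_neg (h : z ^ 2 = d) (hd : d < 0) : z.re = 0 := by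
  obtain ⟨hre, hreim⟩ := Complex.re_sq_sub_im_sq_and_re_mul_im_of_sq_eq h
  rcases mul_eq_zero.mp hreim with h0 | h0
  · exact h0
  · nlinarith

theorem Complex.im_ne_zero_of_sq_eq_of_neg (h : z ^ 2 = d) (hd : d < 0) : z.im ≠ 0 := by
  intro h0
  nlinarith [(Complex.re_sq_sub_im_sq_and_re_mul_im_of_sq_eq h).1]

end ComplexSquareRoot

section QuadraticField

variable {K : Type*} [Field K] {D : ℤ} {α : K}

theorem embedding_sq_eq (hα : α ^ 2 = D) (φ : K →+* ℂ) : φ α ^ 2 = ((D : ℝ) : ℂ) := by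
  rw [← map_pow, hα, map_intCast, Complex.ofReal_intCast]

theorem notMem_range_algebraMap_of_sq_eq [CharZero K] (hD : Squarefree D) (hD1 : D ≠ 1)
    (hα : α ^ 2 = D) : α ∉ Set.range (algebraMap ℚ K) := by
  rintro ⟨q, rfl⟩
  have hq : IsSquare (D : ℚ) := ⟨q, (algebraMap ℚ K).injective (by simpa [sq] using hα.symm)⟩
  obtain ⟨m, rfl⟩ := Rat.isSquare_intCast_iff.mp hq
  rcases Int.isUnit_iff.mp (hD m dvd_rfl) with rfl | rfl <;> simp at hD1

theorem isTotallyReal_of_sq_eq [CharZero K] (hK : finrank ℚ K = 2)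
    (hαQ : α ∉ Set.range (algebraMap ℚ K)) (hα : α ^ 2 = D) (hpos : 0 < D) : IsTotallyReal K where
  isReal w := by
    rw [isReal_iff, ComplexEmbedding.isReal_iff]
    refine ringHom_ext_of_finrank_eq_two hK hαQ ?_
    rw [ComplexEmbedding.conjugate_coe_eq, Complex.conj_eq_iff_im]
    exact Complex.im_eq_zero_of_sq_eq_of_pos (embedding_sq_eq hα _) (by exact_mod_cast hpos)

theorem isTotallyComplex_of_sq_eq (hα : α ^ 2 = D) (hneg : D < 0) : IsTotallyComplex K where
  isComplex w := by
    refine not_isReal_iff_isComplex.mp fun hw ↦ Complex.im_ne_zero_of_sq_eq_of_neg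
      (embedding_sq_eq hα w.embedding) (by exact_mod_cast hneg) (Complex.conj_eq_iff_im.mp ?_)
    rw [← ComplexEmbedding.conjugate_coe_eq, ComplexEmbedding.isReal_iff.mp (isReal_iff.mp hw)]

theorem mem_range_algebraMap_of_norm_embedding_eq_one [CharZero K] (hD : Squarefree D)
    (hneg : D < 0) (hD13 : D ≠ -1 ∧ D ≠ -3) (hK : finrank ℚ K = 2) (hα : α ^ 2 = D)
    (φ : K →+* ℂ) {x : K} (hx : IsIntegral ℤ x) (h1 : ‖φ x‖ = 1) :
    x ∈ Set.range (algebraMap ℚ K) := by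
  obtain ⟨q, r, hqr⟩ := exists_eq_add_mul_of_finrank_eq_two hK
    (notMem_range_algebraMap_of_sq_eq hD (by omega) hα) x
  by_contra hxQ
  have hr : r ≠ 0 := by
    rintro rfl
    exact hxQ ⟨q, by simp [hqr]⟩
  have hsq := embedding_sq_eq hα φ
  have hconj : starRingEnd ℂ (φ α) = -φ α := by
    have := Complex.re_eq_zero_of_sq_eq_of_neg hsq (by exact_mod_cast hneg)
    apply Complex.ext <;> simp [this]
  have hφx : φ x = q + r * φ α := by simp [hqr]
  have hψx : ComplexEmbedding.conjugate φ x = q - r * φ α := by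
    rw [ComplexEmbedding.conjugate_coe_eq, hφx]
    simp [hconj, sub_eq_add_neg]
  -- `2 * q` and `q ^ 2 - D * r ^ 2` are the trace and the norm of `x`
  obtain ⟨t, ht⟩ : ∃ t : ℤ, (t : ℚ) = 2 * q := by
    apply exists_intCast_eq_of_isIntegral_ratCast (A := ℂ)
    have htr : ((2 * q : ℚ) : ℂ) = φ x + ComplexEmbedding.conjugate φ x := by
      rw [hψx, hφx]
      push_cast
      ring
    rw [htr]
    exact (hx.map φ.toIntAlgHom).add (hx.map (ComplexEmbedding.conjugate φ).toIntAlgHom)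
  have hnorm : q ^ 2 - D * r ^ 2 = 1 := by
    have hmul := Complex.mul_conj (φ x)
    rw [← ComplexEmbedding.conjugate_coe_eq, ← Complex.sq_norm, h1, hψx, hφx] at hmul
    exact_mod_cast (by push_cast at hmul ⊢; linear_combination hmul + (r : ℂ) ^ 2 * hsq :
      ((q ^ 2 - D * r ^ 2 : ℚ) : ℂ) = ((1 : ℚ) : ℂ))
  exact (eq_neg_one_or_eq_neg_three_of_sq_sub_mul_sq_eq_one hD hneg ht hnorm hr).elim
    hD13.1 hD13.2

theorem not_isWellRounded_of_sq_eq_of_neg [NumberField K] (hD : Squarefree D) (hneg : D < 0)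
    (hD13 : D ≠ -1 ∧ D ≠ -3) (hK : finrank ℚ K = 2) (hα : α ^ 2 = D) :
    ¬ IsWellRounded K (Set.range (algebraMap (𝓞 K) K)) := by
  have := isTotallyComplex_of_sq_eq hα hneg
  refine not_isWellRounded_of_minVecs_subset hK.ge ?_
  rw [minVecs_ringOfIntegers IsTotallyComplex.mult_eq]
  rintro _ ⟨⟨z, rfl⟩, hz⟩
  let w : InfinitePlace K := Classical.arbitrary _
  exact mem_range_algebraMap_of_norm_embedding_eq_one hD hneg hD13 hK hα w.embedding
    (RingOfIntegers.isIntegral_coe z) (by rw [norm_embedding_eq]; exact hz w)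

end QuadraticField

theorem isWellRounded_of_sq_eq_neg_one_or_neg_three {K : Type*} [Field K] [NumberField K]
    {D : ℤ} {α : K} (hK : finrank ℚ K = 2) (hα : α ^ 2 = D) (hD : D = -1 ∨ D = -3) :
    IsWellRounded K (Set.range (algebraMap (𝓞 K) K)) := by
  have := isTotallyComplex_of_sq_eq hα (by omega)
  let w : InfinitePlace K := Classical.arbitrary _
  have him : (w.embedding α).im ≠ 0 := Complex.im_ne_zero_of_sq_eq_of_neg (embedding_sq_eq hα _)
    (by rcases hD with rfl | rfl <;> norm_num)
  have hmin := @mem_minVecs_ringOfIntegers_of_pow_eq_one K _ _ 2 IsTotallyComplex.mult_eq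
  rcases hD with rfl | rfl
  · refine isWellRounded_of_one_mem_minVecs hK (IsTotallyComplex.isComplex w)
      (hmin one_pos (one_pow 1)) (hmin (n := 4) (by norm_num) ?_) him
    rw [show 4 = 2 * 2 from rfl, pow_mul, hα]
    norm_num
  · have hβ : ((1 + α) / 2) ^ 3 = -1 := by
      push_cast at hα
      linear_combination ((α + 3) / 8) * hα
    refine isWellRounded_of_one_mem_minVecs hK (IsTotallyComplex.isComplex w)
      (hmin one_pos (one_pow 1)) (hmin (β := (1 + α) / 2) (n := 6) (by norm_num) ?_) ?_
    · rw [show 6 = 3 * 2 from rfl, pow_mul, hβ]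
      norm_num
    · simpa [map_div₀, map_ofNat] using him

/-- For a squarefree integer `D ≠ 1` and `K = ℚ(√D)`, the lattice
`Λ_D = σ(O_K) ⊂ ℝ²` is well-rounded if and only if `D = -1` or `D = -3`. -/
theorem statement10 (D : ℤ) (hD : Squarefree D) (hD1 : D ≠ 1)
    (K : Type*) [Field K] [NumberField K] (hdeg : Module.finrank ℚ K = 2)
    (α : K) (hα : α ^ 2 = (D : K)) :
    IsWellRounded K (Set.range (algebraMap (𝓞 K) K)) ↔ D = -1 ∨ D = -3 := by
  rcases hD.ne_zero.lt_or_gt with hneg | hpos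
  · by_cases hD13 : D = -1 ∨ D = -3
    · exact iff_of_true (isWellRounded_of_sq_eq_neg_one_or_neg_three hdeg hα hD13) hD13
    · exact iff_of_false
        (not_isWellRounded_of_sq_eq_of_neg hD hneg (not_or.mp hD13) hdeg hα) hD13
  · have := isTotallyReal_of_sq_eq hdeg (notMem_range_algebraMap_of_sq_eq hD hD1 hα) hα hpos
    exact iff_of_false (IsTotallyReal.not_isWellRounded hdeg.ge) (by omega)
end

section
/- Let K = ℚ(i) or K = ℚ(√(-3)), and let I be any nonzero fractional ideal of O_K. Then the lattice Λ_K(I) = σ(I) ⊂ ℝ² is well-rounded. -/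
/-! For `K = ℚ(i)` or `ℚ(√-3)` the squared length `‖σ x‖²` equals `|N(x)|`, which on `I` takes
values in `(1/c)ℕ` for some `c > 0`; hence the minimum of `σ(I)` is attained at some `x ≠ 0`.
The field contains a non-real root of unity `u` (`i` or `(1 + √-3)/2`), and multiplication by `u`
preserves `I` and lengths, so `u x` is minimal as well. Since `u` is not real, `σ x` and `σ (u x)`
are linearly independent over `ℝ`, hence span `ℝ²`. -/

open NumberField
open scoped nonZeroDivisors

open InfinitePlace

lemma csInf_mem_of_forall_eq_natCast_div {T : Set ℝ} {c : ℝ} (hc : 0 < c) (hT : T.Nonempty)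
    (h : ∀ t ∈ T, ∃ n : ℕ, t = n / c) : sInf T ∈ T := by
  have hN : {n : ℕ | (n : ℝ) / c ∈ T}.Nonempty := by
    obtain ⟨t, ht⟩ := hT
    obtain ⟨n, rfl⟩ := h t ht
    exact ⟨n, ht⟩
  set m := sInf {n : ℕ | (n : ℝ) / c ∈ T}
  have hm : (m : ℝ) / c ∈ T := Nat.sInf_mem hN
  have hlb : ∀ t ∈ T, (m : ℝ) / c ≤ t := by
    rintro _ ht
    obtain ⟨n, rfl⟩ := h _ ht
    gcongr
    exact_mod_cast Nat.sInf_le ht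
  rwa [le_antisymm (csInf_le ⟨_, hlb⟩ hm) (le_csInf hT hlb)]

lemma Complex.im_ne_zero_of_sq_eq_neg {z : ℂ} {c : ℝ} (hc : 0 < c) (hz : z ^ 2 = -c) :
    z.im ≠ 0 := by
  intro him
  have hre := congrArg Complex.re hz
  simp only [sq, Complex.mul_re, him, mul_zero, sub_zero, Complex.neg_re,
    Complex.ofReal_re] at hre
  nlinarith [mul_self_nonneg z.re]

section Field

variable {K : Type*} [Field K]

/-- The witness is `α` or `(1 + α) / 2`, a primitive 4th or 6th root of unity. -/
lemma exists_pow_twelve_eq_one_im_ne_zero [CharZero K]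
    (h : (∃ α : K, α ^ 2 = -1) ∨ (∃ α : K, α ^ 2 = -3)) :
    ∃ u : K, u ^ 12 = 1 ∧ ∀ φ : K →+* ℂ, (φ u).im ≠ 0 := by
  rcases h with ⟨α, hα⟩ | ⟨α, hα⟩
  · refine ⟨α, by linear_combination (α ^ 10 - α ^ 8 + α ^ 6 - α ^ 4 + α ^ 2 - 1) * hα,
      fun φ ↦ Complex.im_ne_zero_of_sq_eq_neg one_pos ?_⟩
    rw [← map_pow, hα]
    simp
  · have hcube : ((1 + α) / 2) ^ 3 = -1 := by linear_combination (α + 3) / 8 * hα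
    refine ⟨(1 + α) / 2, by linear_combination (((1 + α) / 2) ^ 9 - ((1 + α) / 2) ^ 6 +
      ((1 + α) / 2) ^ 3 - 1) * hcube, fun φ ↦ ?_⟩
    have hφα : (φ α).im ≠ 0 := Complex.im_ne_zero_of_sq_eq_neg three_pos (by
      rw [← map_pow, hα, map_neg, map_ofNat, Complex.ofReal_ofNat])
    simpa [map_div₀, map_ofNat] using hφα

lemma isTotallyComplex_of_im_ne_zero {u : K} (hu : ∀ φ : K →+* ℂ, (φ u).im ≠ 0) :
    IsTotallyComplex K where
  isComplex _ := not_isReal_iff_isComplex.mp fun hw ↦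
    hu (Complex.ofRealHom.comp (embedding_of_isReal hw)) (Complex.ofReal_im _)

lemma apply_eq_one_of_pow_eq_one {u : K} {n : ℕ} (hn : n ≠ 0) (hu : u ^ n = 1)
    (w : InfinitePlace K) : w u = 1 :=
  (pow_eq_one_iff_of_nonneg (apply_nonneg w u) hn).mp (by rw [← map_pow, hu, map_one])

end Field

section NumberField

variable {K : Type*} [Field K] [NumberField K]

lemma sqNorm_mul_of_pow_eq_one {u : K} {n : ℕ} (hn : n ≠ 0) (hu : u ^ n = 1) (x : K) :
    sqNorm K (u * x) = sqNorm K x := by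
  simp only [sqNorm, map_mul, apply_eq_one_of_pow_eq_one hn hu, one_mul]

lemma sqNorm_eq_abs_norm [IsTotallyComplex K] (hdeg : Module.finrank ℚ K = 2) (x : K) :
    sqNorm K x = |(Algebra.norm ℚ x : ℝ)| := by
  have hcard : Fintype.card (InfinitePlace K) = 1 := by
    have := IsTotallyComplex.finrank K
    rw [card_eq_nrRealPlaces_add_nrComplexPlaces, IsTotallyComplex.nrRealPlaces_eq_zero]
    omega
  obtain ⟨w, hw⟩ := Fintype.card_eq_one_iff.mp hcard
  have huniv : (Finset.univ : Finset (InfinitePlace K)) = {w} := by ext v; simp [hw v]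
  rw [sqNorm, ← Rat.cast_abs, ← prod_eq_abs_norm, huniv, Finset.sum_singleton,
    Finset.prod_singleton, IsTotallyComplex.mult_eq]

lemma FractionalIdeal.exists_abs_norm_eq_natCast_div (I : FractionalIdeal (𝓞 K)⁰ K) :
    ∃ c : ℝ, 0 < c ∧ ∀ x ∈ I, ∃ n : ℕ, |(Algebra.norm ℚ x : ℝ)| = n / c := by
  obtain ⟨a, ha, hint⟩ := I.isFractional
  have ha0 : (a : K) ≠ 0 := by exact_mod_cast nonZeroDivisors.coe_ne_zero ⟨a, ha⟩
  have hna : (Algebra.norm ℚ (a : K) : ℝ) ≠ 0 := by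
    exact_mod_cast Algebra.norm_ne_zero_iff.mpr ha0
  refine ⟨|(Algebra.norm ℚ (a : K) : ℝ)|, abs_pos.mpr hna, fun x hx ↦ ?_⟩
  obtain ⟨y, hy⟩ := hint x hx
  have hnorm : Algebra.norm ℚ (a : K) * Algebra.norm ℚ x = Algebra.norm ℤ y := by
    rw [Algebra.coe_norm_int, ← map_mul, ← Algebra.smul_def, ← hy]
  refine ⟨(Algebra.norm ℤ y).natAbs, ?_⟩
  rw [Nat.cast_natAbs, Int.cast_abs, eq_div_iff (abs_ne_zero.mpr hna), ← abs_mul, mul_comm]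
  exact_mod_cast congrArg abs hnorm

lemma exists_ne_zero_mem_minVecs [IsTotallyComplex K] (hdeg : Module.finrank ℚ K = 2)
    {I : FractionalIdeal (𝓞 K)⁰ K} (hI : I ≠ 0) :
    ∃ x ∈ minVecs K (I : Set K), x ≠ 0 := by
  obtain ⟨c, hc, hnorm⟩ := I.exists_abs_norm_eq_natCast_div
  obtain ⟨x, hxI, hx0⟩ := (Submodule.ne_bot_iff _).mp
    ((FractionalIdeal.coeToSubmodule_eq_bot).not.mpr hI)
  have hmin : latMin K I ∈ {r : ℝ | ∃ x ∈ (I : Set K), x ≠ 0 ∧ sqNorm K x = r} := by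
    refine csInf_mem_of_forall_eq_natCast_div hc ⟨_, x, hxI, hx0, rfl⟩ ?_
    rintro _ ⟨y, hyI, -, rfl⟩
    rw [sqNorm_eq_abs_norm hdeg]
    exact hnorm y hyI
  obtain ⟨x₀, hx₀I, hx₀0, hx₀⟩ := hmin
  exact ⟨x₀, ⟨hx₀I, hx₀⟩, hx₀0⟩

lemma mul_mem_minVecs_of_pow_eq_one (I : FractionalIdeal (𝓞 K)⁰ K) {u : K} {n : ℕ}
    (hn : n ≠ 0) (hu : u ^ n = 1) {x : K} (hx : x ∈ minVecs K (I : Set K)) :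
    u * x ∈ minVecs K (I : Set K) := by
  have hint : IsIntegral ℤ u := .of_pow (Nat.pos_of_ne_zero hn) (hu ▸ isIntegral_one)
  refine ⟨?_, (sqNorm_mul_of_pow_eq_one hn hu x).trans hx.2⟩
  exact Submodule.smul_mem (I : Submodule (𝓞 K) K) (⟨u, hint⟩ : 𝓞 K) hx.1

lemma linearIndependent_mixedEmbedding_mul {w : InfinitePlace K} (hw : w.IsComplex)
    {x u : K} (hx : x ≠ 0) (hu : (w.embedding u).im ≠ 0) :
    LinearIndependent ℝ ![mixedEmbedding K x, mixedEmbedding K (u * x)] := by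
  refine (LinearIndependent.pair_iff' ?_).mpr fun a ha ↦ hu ?_
  · exact (map_ne_zero_iff _ (mixedEmbedding_injective K)).mpr hx
  have hcoord := congrArg (fun z : mixedEmbedding.mixedSpace K ↦ z.2 ⟨w, hw⟩) ha
  simp only [Prod.smul_snd, Pi.smul_apply, mixedEmbedding.mixedEmbedding_apply_isComplex, map_mul,
    Prod.snd_mul, Pi.mul_apply, Complex.real_smul] at hcoord
  rw [← mul_right_cancel₀ ((map_ne_zero _).mpr hx) hcoord, Complex.ofReal_im]

end NumberField

/-- Let `K = ℚ(i)` or `K = ℚ(√-3)`, and let `I` be a nonzero fractional ideal of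
`O_K`. Then the lattice `Λ_K(I) = σ(I) ⊂ ℝ²` is well-rounded. -/
theorem statement12 (K : Type*) [Field K] [NumberField K]
    (hdeg : Module.finrank ℚ K = 2)
    (h : (∃ α : K, α ^ 2 = -1) ∨ (∃ α : K, α ^ 2 = -3))
    (I : FractionalIdeal (𝓞 K)⁰ K) (hI : I ≠ 0) :
    IsWellRounded K ((I : Submodule (𝓞 K) K) : Set K) := by
  obtain ⟨u, hu12, hu⟩ := exists_pow_twelve_eq_one_im_ne_zero h
  have := isTotallyComplex_of_im_ne_zero hu
  obtain ⟨x, hx, hx0⟩ := exists_ne_zero_mem_minVecs hdeg hI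
  obtain ⟨w⟩ : Nonempty (InfinitePlace K) := inferInstance
  have hli := linearIndependent_mixedEmbedding_mul (IsTotallyComplex.isComplex w) hx0 (hu _)
  have hspan := hli.span_eq_top_of_card_eq_finrank (by
    rw [Fintype.card_fin, mixedEmbedding.finrank, hdeg])
  rw [IsWellRounded, eq_top_iff, ← hspan]
  refine Submodule.span_mono (Set.range_subset_iff.mpr fun i ↦ ?_)
  fin_cases i
  · exact Set.mem_image_of_mem _ hx
  · exact Set.mem_image_of_mem _ (mul_mem_minVecs_of_pow_eq_one I (by norm_num) hu12 hx)
end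

section
/- Let K be an imaginary quadratic number field with K ≠ ℚ(i) and K ≠ ℚ(√(-3)), and let I be a nonzero principal fractional ideal of O_K. Then the lattice Λ_K(I) = σ(I) ⊂ ℝ² is not well-rounded. -/
open NumberField
open scoped nonZeroDivisors

/-!
In an imaginary quadratic field the squared length of `σ x` is the norm `N x`, which is
multiplicative. So the nonzero vectors of `σ (g 𝓞_K)` have squared lengths `N s * N g` with
`0 ≠ s ∈ 𝓞_K`, and the minimal ones are `σ (s g)` with `N s = 1`. Such an `s` has `|τ s| = 1`
for a complex embedding `τ`, so its trace `t ∈ ℤ` satisfies `|t| ≤ 2` and `s² - t s + 1 = 0`;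
`t = 0` would give `s² = -1` and `t = ±1` would give `(2s ± 1)² = -3`, so `s = ±1`.
The minimal vectors `±σ g` then span only a line in `ℝ²`.
-/

open ComplexConjugate

theorem isTotallyComplex_of_isEmpty_ringHom {K : Type*} [Field K] [NumberField K]
    (h : IsEmpty (K →+* ℝ)) : IsTotallyComplex K :=
  ⟨fun _ ↦ InfinitePlace.not_isReal_iff_isComplex.mp
    fun hw ↦ h.elim (InfinitePlace.embedding_of_isReal hw)⟩

theorem sqNorm_nonneg {K : Type*} [Field K] [NumberField K] (x : K) : 0 ≤ sqNorm K x :=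
  Finset.sum_nonneg fun w _ ↦ sq_nonneg (w x)

theorem not_isWellRounded_of_minVecs_subset_pair {K : Type*} [Field K] [NumberField K]
    (hK : 2 ≤ Module.finrank ℚ K) {S : Set K} (g : K) (h : minVecs K S ⊆ {g, -g}) :
    ¬ IsWellRounded K S := by
  intro hWR
  have hle : Submodule.span ℝ (mixedEmbedding K '' minVecs K S) ≤ ℝ ∙ mixedEmbedding K g := by
    rw [Submodule.span_le]
    rintro _ ⟨x, hx, rfl⟩
    rcases h hx with rfl | rfl
    · exact Submodule.mem_span_singleton_self _
    · rw [map_neg]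
      exact neg_mem (Submodule.mem_span_singleton_self _)
  have hrank := (Submodule.finrank_mono hle).trans (finrank_span_le_card {mixedEmbedding K g})
  rw [hWR, finrank_top, mixedEmbedding.finrank, Set.toFinset_singleton,
    Finset.card_singleton] at hrank
  omega

section ImaginaryQuadratic

variable {K : Type*} [Field K] [NumberField K] [IsTotallyComplex K]

theorem exists_embedding_trace_norm (hdeg : Module.finrank ℚ K = 2) :
    ∃ τ : K →+* ℂ, ∀ x : K, ((Algebra.trace ℚ K x : ℚ) : ℂ) = τ x + conj (τ x) ∧
      ((Algebra.norm ℚ x : ℚ) : ℂ) = τ x * conj (τ x) := by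
  classical
  have hcard : Fintype.card (K →ₐ[ℚ] ℂ) = 2 := by rw [AlgHom.card, hdeg]
  obtain ⟨τ⟩ : Nonempty (K →ₐ[ℚ] ℂ) := Fintype.card_pos_iff.mp (by omega)
  let τ' : K →ₐ[ℚ] ℂ := (ComplexEmbedding.conjugate (τ : K →+* ℂ)).toRatAlgHom
  have hne : τ ≠ τ' := fun h ↦ IsTotallyComplex.complexEmbedding_not_isReal (τ : K →+* ℂ)
    (congrArg AlgHom.toRingHom h).symm
  have huniv : (Finset.univ : Finset (K →ₐ[ℚ] ℂ)) = {τ, τ'} :=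
    (Finset.eq_univ_of_card _ (by rw [Finset.card_pair hne, hcard])).symm
  refine ⟨τ, fun x ↦ ⟨?_, ?_⟩⟩
  · simpa [huniv, Finset.sum_pair hne, τ'] using
      trace_eq_sum_embeddings (E := ℂ) (K := ℚ) (x := x)
  · simpa [huniv, Finset.prod_pair hne, τ'] using Algebra.norm_eq_prod_embeddings ℚ ℂ x

theorem subsingleton_infinitePlace (hdeg : Module.finrank ℚ K = 2) :
    Subsingleton (InfinitePlace K) := by
  have h := IsTotallyComplex.finrank (K := K)
  rw [← Fintype.card_le_one_iff_subsingleton,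
    InfinitePlace.card_eq_nrRealPlaces_add_nrComplexPlaces, IsTotallyComplex.nrRealPlaces_eq_zero]
  omega

theorem sqNorm_eq_norm (hdeg : Module.finrank ℚ K = 2) (x : K) :
    sqNorm K x = Algebra.norm ℚ x := by
  obtain ⟨τ, hτ⟩ := exists_embedding_trace_norm hdeg
  have := subsingleton_infinitePlace hdeg
  have hsq : sqNorm K x = ‖τ x‖ ^ 2 := by
    rw [sqNorm, Fintype.sum_subsingleton _ (InfinitePlace.mk τ), InfinitePlace.apply]
  apply Complex.ofReal_injective
  rw [hsq, Complex.ofReal_pow, ← Complex.mul_conj', ← (hτ x).2, Complex.ofReal_ratCast]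

theorem sqNorm_mul (hdeg : Module.finrank ℚ K = 2) (x y : K) :
    sqNorm K (x * y) = sqNorm K x * sqNorm K y := by
  simp only [sqNorm_eq_norm hdeg, map_mul, Rat.cast_mul]

theorem one_le_sqNorm (hdeg : Module.finrank ℚ K = 2) {s : 𝓞 K} (hs : s ≠ 0) :
    1 ≤ sqNorm K s := by
  have hnorm : sqNorm K s = (Algebra.norm ℤ s : ℝ) := by
    rw [sqNorm_eq_norm hdeg, ← Algebra.coe_norm_int, Rat.cast_intCast]
  have hpos : 0 < Algebra.norm ℤ s := by
    refine lt_of_le_of_ne ?_ (Algebra.norm_ne_zero_iff.mpr hs).symm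
    exact_mod_cast hnorm ▸ sqNorm_nonneg (s : K)
  rw [hnorm]
  exact_mod_cast hpos

theorem sq_sub_trace_mul_add_norm (hdeg : Module.finrank ℚ K = 2) (x : K) :
    x ^ 2 - (Algebra.trace ℚ K x : K) * x + (Algebra.norm ℚ x : K) = 0 := by
  obtain ⟨τ, hτ⟩ := exists_embedding_trace_norm hdeg
  apply τ.injective
  simp only [map_add, map_sub, map_mul, map_pow, map_ratCast, map_zero, (hτ x).1, (hτ x).2]
  ring

theorem abs_trace_le_two (hdeg : Module.finrank ℚ K = 2) {x : K}
    (hx : Algebra.norm ℚ x = 1) : |Algebra.trace ℚ K x| ≤ 2 := by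
  obtain ⟨τ, hτ⟩ := exists_embedding_trace_norm hdeg
  have hsq : ((‖τ x‖ ^ 2 : ℝ) : ℂ) = 1 := by
    rw [Complex.ofReal_pow, ← Complex.mul_conj', ← (hτ x).2, hx, Rat.cast_one]
  have hτx : ‖τ x‖ = 1 :=
    (pow_eq_one_iff_of_nonneg (norm_nonneg _) two_ne_zero).mp (Complex.ofReal_eq_one.mp hsq)
  have : ‖((Algebra.trace ℚ K x : ℚ) : ℂ)‖ ≤ 2 := by
    rw [(hτ x).1]
    calc ‖τ x + conj (τ x)‖ ≤ ‖τ x‖ + ‖conj (τ x)‖ := norm_add_le _ _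
      _ = 2 := by rw [Complex.norm_conj, hτx]; norm_num
  rwa [Complex.norm_ratCast, ← Rat.cast_abs, ← Rat.cast_ofNat, Rat.cast_le] at this

theorem coe_eq_one_or_neg_one_of_sqNorm_eq_one (hdeg : Module.finrank ℚ K = 2)
    (h1 : ¬ ∃ α : K, α ^ 2 = -1) (h3 : ¬ ∃ α : K, α ^ 2 = -3) {z : 𝓞 K}
    (hz : sqNorm K z = 1) : (z : K) = 1 ∨ (z : K) = -1 := by
  have hN : Algebra.norm ℚ (z : K) = 1 := by
    exact_mod_cast (sqNorm_eq_norm hdeg (z : K)).symm.trans hz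
  obtain ⟨t, ht⟩ : ∃ t : ℤ, (t : ℚ) = Algebra.trace ℚ K z := ⟨_, Algebra.coe_trace_int z⟩
  have hrel : (z : K) ^ 2 - t * z + 1 = 0 := by
    simpa [← ht, hN] using sq_sub_trace_mul_add_norm hdeg (z : K)
  have hbound : |t| ≤ 2 := by
    have := abs_trace_le_two hdeg hN
    rw [← ht] at this
    exact_mod_cast this
  obtain ⟨hlo, hhi⟩ := abs_le.mp hbound
  interval_cases t
  · refine Or.inr (eq_neg_of_add_eq_zero_left (pow_eq_zero_iff two_ne_zero |>.mp ?_))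
    push_cast at hrel; linear_combination hrel
  · exact (h3 ⟨2 * z + 1, by push_cast at hrel; linear_combination 4 * hrel⟩).elim
  · exact (h1 ⟨z, by push_cast at hrel; linear_combination hrel⟩).elim
  · exact (h3 ⟨2 * z - 1, by push_cast at hrel; linear_combination 4 * hrel⟩).elim
  · refine Or.inl (sub_eq_zero.mp (pow_eq_zero_iff two_ne_zero |>.mp ?_))
    push_cast at hrel; linear_combination hrel

theorem latMin_span_singleton (hdeg : Module.finrank ℚ K = 2) {g : K} (hg : g ≠ 0) :
    latMin K (Submodule.span (𝓞 K) {g} : Set K) = sqNorm K g := by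
  refine IsLeast.csInf_eq ⟨⟨g, Submodule.mem_span_singleton_self g, hg, rfl⟩, ?_⟩
  rintro _ ⟨x, hx, hx0, rfl⟩
  obtain ⟨s, rfl⟩ := Submodule.mem_span_singleton.mp hx
  have hs : s ≠ 0 := by rintro rfl; exact hx0 (zero_smul _ g)
  rw [Algebra.smul_def, sqNorm_mul hdeg]
  exact le_mul_of_one_le_left (sqNorm_nonneg g) (one_le_sqNorm hdeg hs)

theorem minVecs_span_singleton_subset (hdeg : Module.finrank ℚ K = 2)
    (h1 : ¬ ∃ α : K, α ^ 2 = -1) (h3 : ¬ ∃ α : K, α ^ 2 = -3) {g : K} (hg : g ≠ 0) :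
    minVecs K (Submodule.span (𝓞 K) {g} : Set K) ⊆ {g, -g} := by
  rintro _ ⟨hx, hmin⟩
  obtain ⟨s, rfl⟩ := Submodule.mem_span_singleton.mp hx
  have hg' : sqNorm K g ≠ 0 := by
    rw [sqNorm_eq_norm hdeg]
    exact_mod_cast Algebra.norm_ne_zero_iff.mpr hg
  rw [latMin_span_singleton hdeg hg, Algebra.smul_def, sqNorm_mul hdeg, mul_eq_right₀ hg'] at hmin
  rw [show s • g = (s : K) * g from Algebra.smul_def s g]
  rcases coe_eq_one_or_neg_one_of_sqNorm_eq_one hdeg h1 h3 hmin with hs | hs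
  · exact Or.inl (by rw [hs, one_mul])
  · exact Or.inr (by rw [hs, neg_one_mul]; rfl)

end ImaginaryQuadratic

/-- Let `K` be an imaginary quadratic field with `K ≠ ℚ(i)` and `K ≠ ℚ(√-3)`, and
let `I` be a nonzero principal fractional ideal of `O_K`. Then the lattice
`Λ_K(I) = σ(I) ⊂ ℝ²` is not well-rounded. -/
theorem statement13 (K : Type*) [Field K] [NumberField K]
    (hdeg : Module.finrank ℚ K = 2) (himag : IsEmpty (K →+* ℝ))
    (h1 : ¬ ∃ α : K, α ^ 2 = -1) (h3 : ¬ ∃ α : K, α ^ 2 = -3)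
    (I : FractionalIdeal (𝓞 K)⁰ K) (hI : I ≠ 0)
    (hprinc : (I : Submodule (𝓞 K) K).IsPrincipal) :
    ¬ IsWellRounded K ((I : Submodule (𝓞 K) K) : Set K) := by
  have := isTotallyComplex_of_isEmpty_ringHom himag
  set g := Submodule.IsPrincipal.generator (I : Submodule (𝓞 K) K)
  have hg : g ≠ 0 := fun h ↦ hI <| FractionalIdeal.coeToSubmodule_eq_bot.mp <|
    (Submodule.IsPrincipal.eq_bot_iff_generator_eq_zero _).mpr h
  rw [← Submodule.IsPrincipal.span_singleton_generator (I : Submodule (𝓞 K) K)]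
  exact not_isWellRounded_of_minVecs_subset_pair hdeg.ge g
    (minVecs_span_singleton_subset hdeg h1 h3 hg)
end
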